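/- arXiv:2405.16855 — 8 statements merged into one kernel-verified Lean document; each statement's English description precedes it below -/
import Mathlib

section
/- Let E be a non-empty subset of [1,2] and let a ∈ (0,1). Then there exists a constant C depending only on a such that ∫_1^2 d(t,E)^{−1+a} dt ≤ C (1 + ∫_0^1 λ^{a} N(E,λ) dλ/λ). -/
open MeasureTheory

/-- The `δ`-entropy number `N(E,δ) = #{k ∈ ℕ : E ∩ [kδ,(k+1)δ] ≠ ∅}`. -/
noncomputable def entropyNum (E : Set ℝ) (δ : ℝ) : ℕ :=
  Set.ncard {k : ℕ | (E ∩ Set.Icc (k * δ) ((k + 1) * δ)).Nonempty}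

/-!
Write `d = d(t,E) ≤ 1`. Then `d^(a-1) = 1 + (1-a) ∫_d^1 λ^(a-2) dλ`, so integrating over `t` and
exchanging the integrals gives
`∫_1^2 d(t,E)^(a-1) dt ≤ 1 + (1-a) ∫_0^1 λ^(a-2) |{t : d(t,E) ≤ λ}| dλ`.
The set `{t : d(t,E) ≤ λ}` is covered by `N(E,λ)` intervals of length `5λ`, one around each
cell `[kλ,(k+1)λ]` meeting `E`, which bounds the right-hand side by `1 + 5 ∫_0^1 λ^a N(E,λ) dλ/λ`.
-/

open Set Metric
open scoped ENNReal

lemma setOf_entropyNum_finite {E : Set ℝ} (hE : BddAbove E) {δ : ℝ} (hδ : 0 < δ) :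
    {k : ℕ | (E ∩ Icc (k * δ) ((k + 1) * δ)).Nonempty}.Finite := by
  obtain ⟨M, hM⟩ := hE
  refine (finite_Iic ⌈M / δ⌉₊).subset ?_
  rintro k ⟨x, hxE, hkx, -⟩
  have hk : (k : ℝ) ≤ M / δ := by rw [le_div_iff₀ hδ]; linarith [hM hxE]
  exact_mod_cast hk.trans (Nat.le_ceil _)

lemma volume_setOf_infDist_le_le {E : Set ℝ} (hne : E.Nonempty) (hE0 : E ⊆ Ici 0)
    (hE : BddAbove E) {δ : ℝ} (hδ : 0 < δ) :
    volume {t : ℝ | infDist t E ≤ δ} ≤ entropyNum E δ * ENNReal.ofReal (5 * δ) := by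
  have hfin := setOf_entropyNum_finite hE hδ
  have hcover : {t : ℝ | infDist t E ≤ δ} ⊆
      ⋃ k ∈ hfin.toFinset, Icc ((k : ℝ) * δ - 2 * δ) ((k + 1) * δ + 2 * δ) := by
    intro t ht
    obtain ⟨x, hxE, htx⟩ :=
      (infDist_lt_iff hne).mp (lt_of_le_of_lt ht (by linarith : δ < 2 * δ))
    have hx : 0 ≤ x / δ := div_nonneg (hE0 hxE) hδ.le
    have hkx : (⌊x / δ⌋₊ : ℝ) * δ ≤ x := (le_div_iff₀ hδ).mp (Nat.floor_le hx)
    have hxk : x ≤ (⌊x / δ⌋₊ + 1) * δ := (div_le_iff₀ hδ).mp (Nat.lt_floor_add_one _).le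
    refine mem_biUnion ((Finite.mem_toFinset hfin).mpr ⟨x, hxE, hkx, hxk⟩) ?_
    rw [Real.dist_eq, abs_lt] at htx
    constructor <;> linarith [htx.1, htx.2]
  calc volume {t : ℝ | infDist t E ≤ δ}
      ≤ ∑ k ∈ hfin.toFinset, volume (Icc ((k : ℝ) * δ - 2 * δ) ((k + 1) * δ + 2 * δ)) :=
        (measure_mono hcover).trans (measure_biUnion_finset_le _ _)
    _ = entropyNum E δ * ENNReal.ofReal (5 * δ) := by
        have hlen : ∀ k : ℝ, (k + 1) * δ + 2 * δ - (k * δ - 2 * δ) = 5 * δ := fun k => by ring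
        simp only [Real.volume_Icc, hlen, Finset.sum_const, nsmul_eq_mul, entropyNum,
          ncard_eq_toFinset_card _ hfin]

lemma ofReal_rpow_sub_one_eq_one_add_lintegral {a d : ℝ} (ha : a < 1) (hd0 : 0 < d)
    (hd1 : d ≤ 1) :
    ENNReal.ofReal (d ^ (a - 1)) =
      1 + ENNReal.ofReal (1 - a) * ∫⁻ l in Icc d 1, ENNReal.ofReal (l ^ (a - 2)) := by
  have hzero : (0 : ℝ) ∉ uIcc d 1 := by rw [uIcc_of_le hd1]; exact fun h => hd0.not_ge h.1
  have hint : ∫ l in d..1, l ^ (a - 2) = (1 - d ^ (a - 1)) / (a - 1) := by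
    rw [integral_rpow (Or.inr ⟨by linarith, hzero⟩), Real.one_rpow,
      show a - 2 + 1 = a - 1 by ring]
  have hlint : ∫⁻ l in Icc d 1, ENNReal.ofReal (l ^ (a - 2)) =
      ENNReal.ofReal ((1 - d ^ (a - 1)) / (a - 1)) := by
    rw [setLIntegral_congr Ioc_ae_eq_Icc.symm, ← hint, intervalIntegral.integral_of_le hd1,
      ofReal_integral_eq_lintegral_ofReal]
    · exact (intervalIntegrable_iff_integrableOn_Ioc_of_le hd1).mp
        (intervalIntegral.intervalIntegrable_rpow (Or.inr hzero))
    · filter_upwards [ae_restrict_mem measurableSet_Ioc] with l hl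
      exact Real.rpow_nonneg (hd0.trans hl.1).le _
  have hge : 1 ≤ d ^ (a - 1) := Real.one_le_rpow_of_pos_of_le_one_of_nonpos hd0 hd1 (by linarith)
  have hcoef : (1 - a) * ((1 - d ^ (a - 1)) / (a - 1)) = d ^ (a - 1) - 1 := by
    field_simp [show a - 1 ≠ 0 by linarith]
    ring
  rw [hlint, ← ENNReal.ofReal_mul (by linarith), hcoef, ← ENNReal.ofReal_one,
    ← ENNReal.ofReal_add zero_le_one (by linarith), add_sub_cancel]

lemma ofReal_rpow_sub_one_le_one_add_lintegral {a d : ℝ} (ha : a < 1) (hd0 : 0 ≤ d)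
    (hd1 : d ≤ 1) :
    ENNReal.ofReal (d ^ (a - 1)) ≤ 1 + ENNReal.ofReal (1 - a) *
      ∫⁻ l in Ioc 0 1, (Ici d).indicator (fun l => ENNReal.ofReal (l ^ (a - 2))) l := by
  rcases hd0.eq_or_lt with rfl | hd0
  · -- `Real.rpow` sets `0 ^ (a - 1) = 0`
    simp [Real.zero_rpow (by linarith : a - 1 ≠ 0)]
  · have hIcc : Ici d ∩ Ioc 0 1 = Icc d 1 := by
      ext l
      simp only [mem_inter_iff, mem_Ici, mem_Ioc, mem_Icc]
      constructor
      · exact fun h => ⟨h.1, h.2.2⟩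
      · exact fun h => ⟨h.1, hd0.trans_le h.1, h.2⟩
    rw [lintegral_indicator measurableSet_Ici, Measure.restrict_restrict measurableSet_Ici, hIcc,
      ofReal_rpow_sub_one_eq_one_add_lintegral ha hd0 hd1]

lemma lintegral_lintegral_indicator_infDist_le {E : Set ℝ} (hne : E.Nonempty) (hE0 : E ⊆ Ici 0)
    (hE : BddAbove E) (s : Set ℝ) (a : ℝ) :
    ∫⁻ t in s, ∫⁻ l in Ioc 0 1,
        (Ici (infDist t E)).indicator (fun l => ENNReal.ofReal (l ^ (a - 2))) l ≤
      ENNReal.ofReal 5 * ∫⁻ l in Ioc 0 1, ENNReal.ofReal (l ^ a * entropyNum E l / l) := by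
  have hmeas : Measurable fun p : ℝ × ℝ => {q : ℝ × ℝ | infDist q.1 E ≤ q.2}.indicator
      (fun q => ENNReal.ofReal (q.2 ^ (a - 2))) p :=
    (by fun_prop : Measurable fun q : ℝ × ℝ => ENNReal.ofReal (q.2 ^ (a - 2))).indicator
      (measurableSet_le (by fun_prop) measurable_snd)
  rw [lintegral_lintegral_swap hmeas.aemeasurable,
    ← lintegral_const_mul' _ _ ENNReal.ofReal_ne_top]
  refine setLIntegral_mono' measurableSet_Ioc fun l hl => ?_
  have hslice : ∀ t, (Ici (infDist t E)).indicator (fun l => ENNReal.ofReal (l ^ (a - 2))) l =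
      {t | infDist t E ≤ l}.indicator (fun _ => ENNReal.ofReal (l ^ (a - 2))) t := fun t => rfl
  calc ∫⁻ t in s, (Ici (infDist t E)).indicator (fun l => ENNReal.ofReal (l ^ (a - 2))) l
      = ENNReal.ofReal (l ^ (a - 2)) * volume.restrict s {t | infDist t E ≤ l} := by
        simp only [hslice]
        exact lintegral_indicator_const (measurableSet_le (by fun_prop) measurable_const) _
    _ ≤ ENNReal.ofReal (l ^ (a - 2)) * (entropyNum E l * ENNReal.ofReal (5 * l)) := by
        gcongr
        exact (Measure.restrict_apply_le _ _).trans (volume_setOf_infDist_le_le hne hE0 hE hl.1)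
    _ = ENNReal.ofReal 5 * ENNReal.ofReal (l ^ a * entropyNum E l / l) := by
        rw [← ENNReal.ofReal_natCast, ← ENNReal.ofReal_mul (Nat.cast_nonneg _),
          ← ENNReal.ofReal_mul (Real.rpow_nonneg hl.1.le _), ← ENNReal.ofReal_mul (by norm_num),
          Real.rpow_sub hl.1, Real.rpow_two]
        congr 1
        field_simp

theorem stmt1 (a : ℝ) (ha : a ∈ Set.Ioo (0 : ℝ) 1) :
    ∃ C : ℝ, 0 < C ∧
      ∀ E : Set ℝ, E.Nonempty → E ⊆ Set.Icc 1 2 →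
        (∫⁻ t in Set.Icc (1 : ℝ) 2,
            ENNReal.ofReal (Metric.infDist t E ^ (-1 + a))) ≤
          ENNReal.ofReal C *
            (1 + ∫⁻ lam in Set.Ioc (0 : ℝ) 1,
              ENNReal.ofReal (lam ^ a * (entropyNum E lam : ℝ) / lam)) := by
  refine ⟨5, by norm_num, fun E hne hE => ?_⟩
  have hE0 : E ⊆ Ici 0 := fun x hx => zero_le_one.trans (hE hx).1
  have hEbdd : BddAbove E := ⟨2, fun x hx => (hE hx).2⟩
  have hdist : ∀ t ∈ Icc (1 : ℝ) 2, infDist t E ≤ 1 := by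
    intro t ht
    obtain ⟨x, hx⟩ := hne
    refine (infDist_le_dist_of_mem hx).trans ?_
    rw [Real.dist_eq, abs_le]
    constructor <;> linarith [ht.1, ht.2, (hE hx).1, (hE hx).2]
  set I := ∫⁻ l in Ioc (0 : ℝ) 1, ENNReal.ofReal (l ^ a * (entropyNum E l : ℝ) / l)
  calc ∫⁻ t in Icc (1 : ℝ) 2, ENNReal.ofReal (infDist t E ^ (-1 + a))
      ≤ ∫⁻ t in Icc (1 : ℝ) 2, (1 + ENNReal.ofReal (1 - a) * ∫⁻ l in Ioc 0 1,
          (Ici (infDist t E)).indicator (fun l => ENNReal.ofReal (l ^ (a - 2))) l) := by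
        refine setLIntegral_mono' measurableSet_Icc fun t ht => ?_
        rw [neg_add_eq_sub]
        exact ofReal_rpow_sub_one_le_one_add_lintegral ha.2 infDist_nonneg (hdist t ht)
    _ = 1 + ENNReal.ofReal (1 - a) * ∫⁻ t in Icc (1 : ℝ) 2, ∫⁻ l in Ioc 0 1,
          (Ici (infDist t E)).indicator (fun l => ENNReal.ofReal (l ^ (a - 2))) l := by
        rw [lintegral_add_left measurable_const, lintegral_const_mul' _ _ ENNReal.ofReal_ne_top]
        norm_num
    _ ≤ 1 + ENNReal.ofReal (1 - a) * (ENNReal.ofReal 5 * I) := by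
        gcongr
        exact lintegral_lintegral_indicator_infDist_le hne hE0 hEbdd _ a
    _ ≤ ENNReal.ofReal 5 * (1 + I) := by
        rw [mul_add, mul_one]
        refine add_le_add ?_ ?_
        · exact ENNReal.one_le_ofReal.mpr (by norm_num)
        · exact mul_le_of_le_one_left' (ENNReal.ofReal_le_one.mpr (by linarith [ha.1]))
end

section
/- Let 0 < r < ∞ and let (t_n)_{n≥1} be a decreasing sequence of positive reals with t_n → 0 that belongs to ℓ^{r,∞}(ℕ). Then the Minkowski dimension of {t_n : n ≥ 1} is at most r/(1+r). More generally, for any real-valued sequence (a_n)_{n≥1} ∈ ℓ^{r,∞}(ℕ), the Minkowski dimension of {a_n : n ≥ 1} is at most r/(1+r). -/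
open MeasureTheory

/-- The (upper) Minkowski dimension of a bounded set `E ⊆ ℝ`. -/
noncomputable def minkowskiDim (E : Set ℝ) : ℝ :=
  sInf {a : ℝ | 0 < a ∧ ∃ C : ℝ, 0 < C ∧
    ∀ δ ∈ Set.Ioc (0 : ℝ) 1, (entropyNum E δ : ℝ) ≤ C * δ ^ (-a)}

/-- A sequence belongs to `ℓ^{r,∞}(ℕ)` if `#{n : |t_n| ≥ δ} ≤ N δ^{-r}` for all `δ > 0`. -/
def memLorentz (r : ℝ) (t : ℕ → ℝ) : Prop :=
  ∃ N : ℝ, 0 < N ∧ ∀ δ : ℝ, 0 < δ →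
    Set.encard {n : ℕ | δ ≤ |t n|} ≤ ENNReal.ofReal (N * δ ^ (-r))

/-!
Fix a scale `δ` and a threshold `η`. The grid cells `[kδ, (k+1)δ]` with `kδ < η` number at most
`⌈η / δ⌉`. A cell with `kδ ≥ η` meets the set only at a value `a n ≥ η`, there are at most
`N η ^ (-r)` such values, and each point lies in at most two cells. Choosing `η = δ ^ (1/(1+r))`
makes both counts `≍ δ ^ (-r/(1+r))`.
-/

lemma minkowskiDim_le_of_entropyNum_le {E : Set ℝ} {s C : ℝ} (hs : 0 < s) (hC : 0 < C)
    (h : ∀ δ ∈ Set.Ioc (0 : ℝ) 1, (entropyNum E δ : ℝ) ≤ C * δ ^ (-s)) :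
    minkowskiDim E ≤ s :=
  csInf_le ⟨0, fun _ ha => ha.1.le⟩ ⟨hs, C, hC, h⟩

lemma memLorentz.exists_finite_ncard_le {r : ℝ} {a : ℕ → ℝ} (ha : memLorentz r a) :
    ∃ N : ℝ, 0 < N ∧ ∀ δ : ℝ, 0 < δ →
      {n | δ ≤ |a n|}.Finite ∧ ({n | δ ≤ |a n|}.ncard : ℝ) ≤ N * δ ^ (-r) := by
  obtain ⟨N, hN, hbound⟩ := ha
  refine ⟨N, hN, fun δ hδ => ?_⟩
  have hfin : {n | δ ≤ |a n|}.Finite := by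
    rw [← Set.encard_lt_top_iff, ← ENat.toENNReal_lt, ENat.toENNReal_top]
    exact (hbound δ hδ).trans_lt ENNReal.ofReal_lt_top
  refine ⟨hfin, ?_⟩
  have hcard := hbound δ hδ
  rw [← hfin.cast_ncard_eq, ENat.toENNReal_coe] at hcard
  simpa using ENNReal.toReal_le_of_le_ofReal (by positivity) hcard

lemma eq_floor_or_eq_floor_sub_one_of_mem_Icc {δ x : ℝ} {k : ℕ} (hδ : 0 < δ)
    (hx : x ∈ Set.Icc (k * δ) ((k + 1) * δ)) : k = ⌊x / δ⌋₊ ∨ k = ⌊x / δ⌋₊ - 1 := by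
  have hlow : k ≤ ⌊x / δ⌋₊ := Nat.le_floor ((le_div_iff₀ hδ).2 hx.1)
  have hup : ⌊x / δ⌋₊ ≤ k + 1 := Nat.floor_le_of_le (by exact_mod_cast (div_le_iff₀ hδ).2 hx.2)
  omega

lemma entropyNum_le_ceil_add_two_mul_ncard {E : Set ℝ} {δ : ℝ} (η : ℝ) (hδ : 0 < δ)
    (hE : (E ∩ Set.Ici η).Finite) :
    entropyNum E δ ≤ ⌈η / δ⌉₊ + 2 * (E ∩ Set.Ici η).ncard := by
  set S := E ∩ Set.Ici η
  set f : ℝ → ℕ := fun x => ⌊x / δ⌋₊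
  have hsub : {k : ℕ | (E ∩ Set.Icc (k * δ) ((k + 1) * δ)).Nonempty} ⊆
      Set.Iio ⌈η / δ⌉₊ ∪ (f '' S ∪ (f · - 1) '' S) := by
    rintro k ⟨x, hxE, hx⟩
    by_cases hk : k < ⌈η / δ⌉₊
    · exact Or.inl hk
    · have hηx : η ≤ x := calc
        η ≤ k * δ := (div_le_iff₀ hδ).1 (Nat.ceil_le.1 (not_lt.1 hk))
        _ ≤ x := hx.1
      rcases eq_floor_or_eq_floor_sub_one_of_mem_Icc hδ hx with rfl | rfl
      · exact Or.inr (Or.inl ⟨x, ⟨hxE, hηx⟩, rfl⟩)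
      · exact Or.inr (Or.inr ⟨x, ⟨hxE, hηx⟩, rfl⟩)
  calc entropyNum E δ
      ≤ (Set.Iio ⌈η / δ⌉₊ ∪ (f '' S ∪ (f · - 1) '' S)).ncard :=
        Set.ncard_le_ncard hsub ((Set.finite_Iio _).union ((hE.image _).union (hE.image _)))
    _ ≤ ⌈η / δ⌉₊ + ((f '' S).ncard + ((f · - 1) '' S).ncard) := by
        grw [Set.ncard_union_le, Set.ncard_union_le, ← Finset.coe_range, Set.ncard_coe_finset,
          Finset.card_range]
    _ ≤ ⌈η / δ⌉₊ + 2 * S.ncard := by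
        grw [Set.ncard_image_le hE, Set.ncard_image_le hE]
        omega

theorem minkowskiDim_range_le_of_memLorentz {r : ℝ} (hr : 0 < r) {a : ℕ → ℝ}
    (ha : memLorentz r a) : minkowskiDim (Set.range a) ≤ r / (1 + r) := by
  obtain ⟨N, hN, hlarge⟩ := ha.exists_finite_ncard_le
  refine minkowskiDim_le_of_entropyNum_le (by positivity) (by positivity : 0 < 2 * N + 2) ?_
  rintro δ ⟨hδ, hδ1⟩
  set η := δ ^ (1 / (1 + r))
  set s := r / (1 + r) with hs
  have hη : η / δ = δ ^ (-s) := by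
    rw [← Real.rpow_sub_one hδ.ne', hs]
    congr 1
    field_simp
    ring
  have hηr : η ^ (-r) = δ ^ (-s) := by
    rw [← Real.rpow_mul hδ.le, hs]
    congr 1
    field_simp
  obtain ⟨hfin, hcard⟩ := hlarge η (by positivity)
  have hsub : Set.range a ∩ Set.Ici η ⊆ a '' {n | η ≤ |a n|} := by
    rintro _ ⟨⟨n, rfl⟩, hn⟩
    exact ⟨n, (Set.mem_Ici.1 hn).trans (le_abs_self _), rfl⟩
  have hS : ((Set.range a ∩ Set.Ici η).ncard : ℝ) ≤ N * δ ^ (-s) := by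
    rw [← hηr]
    refine le_trans ?_ hcard
    exact_mod_cast (Set.ncard_le_ncard hsub (hfin.image a)).trans (Set.ncard_image_le hfin)
  have hM : (⌈η / δ⌉₊ : ℝ) ≤ δ ^ (-s) + 1 := by
    rw [← hη]
    exact (Nat.ceil_lt_add_one (by positivity)).le
  have hone : 1 ≤ δ ^ (-s) :=
    Real.one_le_rpow_of_pos_of_le_one_of_nonpos hδ hδ1 (neg_nonpos.2 (by positivity))
  calc (entropyNum (Set.range a) δ : ℝ)
      ≤ ⌈η / δ⌉₊ + 2 * (Set.range a ∩ Set.Ici η).ncard := by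
        exact_mod_cast entropyNum_le_ceil_add_two_mul_ncard η hδ ((hfin.image a).subset hsub)
    _ ≤ δ ^ (-s) + 1 + 2 * (N * δ ^ (-s)) := by gcongr
    _ ≤ (2 * N + 2) * δ ^ (-s) := by linarith

theorem stmt6_general (r : ℝ) (hr : 0 < r) (t : ℕ → ℝ)
    (hlor : memLorentz r t) :
    minkowskiDim (Set.range t) ≤ r / (1 + r) ∧
      ∀ a : ℕ → ℝ, memLorentz r a → minkowskiDim (Set.range a) ≤ r / (1 + r) :=
  ⟨minkowskiDim_range_le_of_memLorentz hr hlor,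
    fun _ ha => minkowskiDim_range_le_of_memLorentz hr ha⟩

theorem stmt6 (r : ℝ) (hr : 0 < r) (t : ℕ → ℝ) (hpos : ∀ n, 0 < t n)
    (hanti : Antitone t) (hlim : Filter.Tendsto t Filter.atTop (nhds 0))
    (hlor : memLorentz r t) :
    minkowskiDim (Set.range t) ≤ r / (1 + r) ∧
      ∀ a : ℕ → ℝ, memLorentz r a → minkowskiDim (Set.range a) ≤ r / (1 + r) :=
  stmt6_general r hr t hlor
end

section
/- Let (t_n)_{n≥1} be a strictly decreasing sequence of positive reals with t_n → 0 such that (t_n − t_{n+1})_{n≥1} is decreasing, let α ∈ (0,1), and suppose S := ∑_{k=1}^∞ (t_k − t_{k+1})^α < ∞. Then for every δ > 0 one has δ^{α/(1−α)} · #{n : t_n ≥ δ} ≤ S^{1/(1−α)}; in particular (t_n) ∈ ℓ^{α/(1−α),∞}(ℕ). -/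
/-!
Write `d n = t n - t (n + 1)`, so that `t n = ∑_{k ≥ n} d k`. As `d` decreases,
`t n ≤ d n ^ (1 - α) * ∑_{k ≥ n} d k ^ α ≤ d n ^ (1 - α) * S` and `(n + 1) * d n ^ α ≤ S`.
If `δ ≤ t n`, raising the first bound to the power `α / (1 - α)` turns `d n ^ (1 - α)` into
`d n ^ α`, and the second bound then gives `(n + 1) * δ ^ (α / (1 - α)) ≤ S ^ (1 / (1 - α))`:
every `n` with `δ ≤ t n` lies below `S ^ (1 / (1 - α)) / δ ^ (α / (1 - α))`.
-/

open MeasureTheory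

open Filter Topology

theorem Antitone.hasSum_sub_succ {f : ℕ → ℝ} {l : ℝ} (hf : Antitone f)
    (hl : Tendsto f atTop (𝓝 l)) : HasSum (fun k => f k - f (k + 1)) (f 0 - l) := by
  rw [hasSum_iff_tendsto_nat_of_nonneg fun k => sub_nonneg.2 (hf k.le_succ)]
  simp only [Finset.sum_range_sub']
  exact tendsto_const_nhds.sub hl

theorem Antitone.succ_mul_le_tsum {f : ℕ → ℝ} (hf : Antitone f) (hf0 : ∀ k, 0 ≤ f k)
    (hs : Summable f) (n : ℕ) : (n + 1 : ℝ) * f n ≤ ∑' k, f k :=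
  calc (n + 1 : ℝ) * f n = ∑ k ∈ Finset.range (n + 1), f n := by simp
    _ ≤ ∑ k ∈ Finset.range (n + 1), f k :=
        Finset.sum_le_sum fun k hk => hf (Finset.mem_range_succ_iff.1 hk)
    _ ≤ ∑' k, f k := hs.sum_le_tsum _ fun k _ => hf0 k

theorem Antitone.tsum_le_rpow_mul_tsum_rpow {d : ℕ → ℝ} {α : ℝ} (hd : Antitone d)
    (hd0 : ∀ k, 0 ≤ d k) (hα : α ≤ 1) (hs : Summable d) (hsα : Summable fun k => d k ^ α) :
    ∑' k, d k ≤ d 0 ^ (1 - α) * ∑' k, d k ^ α := by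
  rw [← tsum_mul_left]
  refine hs.tsum_le_tsum (fun k => ?_) (hsα.mul_left _)
  calc d k = d k ^ α * d k ^ (1 - α) := by
        rw [← Real.rpow_add' (hd0 k) (by norm_num), add_sub_cancel, Real.rpow_one]
    _ ≤ d k ^ α * d 0 ^ (1 - α) :=
        mul_le_mul_of_nonneg_left (Real.rpow_le_rpow (hd0 k) (hd k.zero_le) (by linarith))
          (Real.rpow_nonneg (hd0 k) α)
    _ = d 0 ^ (1 - α) * d k ^ α := mul_comm _ _

theorem mul_rpow_le_rpow_of_le_rpow_mul {α c δ x S : ℝ} (hα0 : 0 ≤ α) (hα1 : α < 1)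
    (hc : 0 ≤ c) (hδ : 0 ≤ δ) (hx : 0 ≤ x) (hS : 0 ≤ S)
    (hδx : δ ≤ x ^ (1 - α) * S) (hcx : c * x ^ α ≤ S) :
    c * δ ^ (α / (1 - α)) ≤ S ^ (1 / (1 - α)) := by
  have h1α : 0 < 1 - α := by linarith
  have hr : 0 ≤ α / (1 - α) := div_nonneg hα0 h1α.le
  have hpow : (x ^ (1 - α) * S) ^ (α / (1 - α)) = x ^ α * S ^ (α / (1 - α)) := by
    rw [Real.mul_rpow (Real.rpow_nonneg hx _) hS, ← Real.rpow_mul hx,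
      mul_div_cancel₀ _ h1α.ne']
  calc c * δ ^ (α / (1 - α)) ≤ c * (x ^ α * S ^ (α / (1 - α))) := by
        rw [← hpow]; gcongr
    _ = c * x ^ α * S ^ (α / (1 - α)) := by ring
    _ ≤ S * S ^ (α / (1 - α)) := by gcongr
    _ = S ^ (1 / (1 - α)) := by
        rw [← Real.rpow_one_add' hS (by positivity)]
        congr 1
        field_simp
        ring

theorem ofReal_mul_encard_le_of_forall_succ_mul_le {s : Set ℕ} {a b : ℝ} (ha : 0 < a)
    (h : ∀ n ∈ s, (n + 1 : ℝ) * a ≤ b) : ENNReal.ofReal a * s.encard ≤ ENNReal.ofReal b := by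
  have hs : s ⊆ Finset.range ⌊b / a⌋₊ := fun n hn => by
    rw [Finset.coe_range, Set.mem_Iio, ← Nat.add_one_le_iff]
    exact Nat.le_floor ((le_div_iff₀ ha).2 (by exact_mod_cast h n hn))
  have hcard : s.encard ≤ ⌊b / a⌋₊ := by
    simpa only [Set.encard_coe_eq_coe_finsetCard, Finset.card_range] using Set.encard_le_encard hs
  calc ENNReal.ofReal a * s.encard ≤ ENNReal.ofReal a * ⌊b / a⌋₊ := by
        gcongr
        exact_mod_cast hcard
    _ = ENNReal.ofReal (a * ⌊b / a⌋₊) := by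
        rw [ENNReal.ofReal_mul ha.le, ENNReal.ofReal_natCast]
    _ ≤ ENNReal.ofReal b := by
        rcases le_or_gt 0 (b / a) with hba | hba
        · exact ENNReal.ofReal_le_ofReal ((le_div_iff₀' ha).1 (Nat.floor_le hba))
        · simp [Nat.floor_eq_zero.2 (hba.trans one_pos)]

theorem memLorentz_of_forall_rpow_mul_encard_le {r C : ℝ} {t : ℕ → ℝ} (hC : 0 < C)
    (h : ∀ δ : ℝ, 0 < δ → ENNReal.ofReal (δ ^ r) * Set.encard {n : ℕ | δ ≤ |t n|} ≤
      ENNReal.ofReal C) : memLorentz r t := by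
  refine ⟨C, hC, fun δ hδ => ?_⟩
  have hδr : 0 < δ ^ r := Real.rpow_pos_of_pos hδ r
  rw [Real.rpow_neg hδ.le, ← div_eq_mul_inv, ENNReal.ofReal_div_of_pos hδr,
    ENNReal.le_div_iff_mul_le (Or.inl (ENNReal.ofReal_pos.2 hδr).ne') (Or.inl ENNReal.ofReal_ne_top),
    mul_comm]
  exact h δ hδ

theorem stmt8 (t : ℕ → ℝ) (hpos : ∀ n, 0 < t n) (hanti : StrictAnti t)
    (hlim : Filter.Tendsto t Filter.atTop (nhds 0))
    (hdiff : Antitone fun n : ℕ => t n - t (n + 1))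
    (α : ℝ) (hα : α ∈ Set.Ioo (0 : ℝ) 1)
    (hS : Summable fun k : ℕ => (t k - t (k + 1)) ^ α) :
    (∀ δ : ℝ, 0 < δ →
        ENNReal.ofReal (δ ^ (α / (1 - α))) * Set.encard {n : ℕ | δ ≤ t n} ≤
          ENNReal.ofReal ((∑' k : ℕ, (t k - t (k + 1)) ^ α) ^ (1 / (1 - α)))) ∧
      memLorentz (α / (1 - α)) t := by
  obtain ⟨hα0, hα1⟩ := hα
  set d : ℕ → ℝ := fun n => t n - t (n + 1) with hd
  set S := ∑' k, d k ^ α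
  have hd0 : ∀ n, 0 < d n := fun n => sub_pos.2 (hanti n.lt_succ_self)
  have hdα0 : ∀ n, 0 ≤ d n ^ α := fun n => Real.rpow_nonneg (hd0 n).le α
  have hdα : Antitone fun n => d n ^ α := fun m n hmn =>
    Real.rpow_le_rpow (hd0 n).le (hdiff hmn) hα0.le
  have hSpos : 0 < S := hS.tsum_pos hdα0 0 (Real.rpow_pos_of_pos (hd0 0) α)
  have htail : ∀ n, t n ≤ d n ^ (1 - α) * S := fun n => by
    have hsum : HasSum (fun k => d (k + n)) (t n) := by
      simpa [hd, add_right_comm] using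
        (hanti.antitone.comp_monotone (monotone_id.add_const n)).hasSum_sub_succ
          ((tendsto_add_atTop_iff_nat n).2 hlim)
    calc t n = ∑' k, d (k + n) := hsum.tsum_eq.symm
      _ ≤ d n ^ (1 - α) * ∑' k, d (k + n) ^ α := by
          simpa using (hdiff.comp_monotone (monotone_id.add_const n)).tsum_le_rpow_mul_tsum_rpow
            (fun k => (hd0 _).le) hα1.le hsum.summable (hS.comp_injective (add_left_injective n))
      _ ≤ d n ^ (1 - α) * S :=
          mul_le_mul_of_nonneg_left (tsum_comp_le_tsum_of_inj hS hdα0 (add_left_injective n))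
            (Real.rpow_nonneg (hd0 n).le _)
  have hmain : ∀ δ : ℝ, 0 < δ →
      ENNReal.ofReal (δ ^ (α / (1 - α))) * Set.encard {n : ℕ | δ ≤ t n} ≤
        ENNReal.ofReal (S ^ (1 / (1 - α))) := fun δ hδ =>
    ofReal_mul_encard_le_of_forall_succ_mul_le (Real.rpow_pos_of_pos hδ _) fun n hn =>
      mul_rpow_le_rpow_of_le_rpow_mul hα0.le hα1 (by positivity) hδ.le (hd0 n).le hSpos.le
        (hn.trans (htail n)) (hdα.succ_mul_le_tsum hdα0 hS n)
  refine ⟨hmain, memLorentz_of_forall_rpow_mul_encard_le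
    (Real.rpow_pos_of_pos hSpos (1 / (1 - α))) fun δ hδ => ?_⟩
  simpa only [abs_of_pos (hpos _)] using hmain δ hδ
end

section
/- Let β ∈ (0,1] and let F : [0,∞) → ℂ be continuous on [0,∞) and locally Hölder continuous of order β on (0,∞). Then for every α ∈ (0,β) and every t > 0, the integral ∫_0^t (F(t) − F(s)) (t − s)^{−1−α} ds converges absolutely, the function I^{1−α}F is differentiable at t, and its derivative equals D^α F(t) := (1/Γ(1−α)) ( t^{−α} F(t) + α ∫_0^t (F(t) − F(s)) (t − s)^{−1−α} ds ). -/
/-!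
Put `G s = F t - F s`, so that `∫₀ᵘ (u - s)^(-α) F s ds = u^(1-α)/(1-α) F t - Ψ u` with
`Ψ u = ∫₀ᵘ (u - s)^(-α) G s ds` and `‖G s‖ ≤ K |t - s|^β`. For `u` near `t`, cut the integrals
defining `Ψ u` and `Ψ t` at `c = min u t - |u - t|`. On `(0, c]` the difference quotient of the
kernels is dominated by `2^(1+α) α (t - s)^(-1-α)`, and `(t - s)^(-1-α) |t - s|^β` is integrable
since `β > α`, so dominated convergence yields `-α ∫₀ᵗ (t - s)^(-1-α) G s ds`. The two pieces over
`(c, u)` and `(c, t)` have length `O(|u - t|)` and `G = O(|u - t|^β)` there, so they are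
`O(|u - t|^(1+β-α)) = o(u - t)`.
-/

open MeasureTheory Set Filter Topology

lemma integrableOn_Ioo_sub_rpow {r a b : ℝ} (hr : -1 < r) :
    IntegrableOn (fun s : ℝ => (b - s) ^ r) (Ioo a b) := by
  rcases le_or_gt a b with hab | hba
  · have h := (intervalIntegral.intervalIntegrable_rpow' (a := b - a) (b := 0) hr).comp_sub_left b
    simp only [sub_sub_cancel, sub_zero] at h
    rwa [intervalIntegrable_iff_integrableOn_Ioo_of_le hab] at h
  · simp [Ioo_eq_empty_of_le hba.le]

lemma integral_Ioo_sub_rpow {r a b : ℝ} (hr : -1 < r) (hab : a ≤ b) :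
    ∫ s in Ioo a b, (b - s) ^ r = (b - a) ^ (r + 1) / (r + 1) := by
  rw [← integral_Ioc_eq_integral_Ioo, ← intervalIntegral.integral_of_le hab,
    intervalIntegral.integral_comp_sub_left (fun x : ℝ => x ^ r), integral_rpow (Or.inl hr),
    sub_self, Real.zero_rpow (by linarith), sub_zero]

lemma abs_rpow_neg_sub_rpow_neg_le {α x y : ℝ} (hα : 0 < α) (hx : 0 < x) (hy : 0 < y) :
    |x ^ (-α) - y ^ (-α)| ≤ α * min x y ^ (-1 - α) * |x - y| := by
  have hmin : 0 < min x y := lt_min hx hy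
  have hderiv : ∀ z ∈ uIcc x y,
      HasDerivWithinAt (fun z : ℝ => z ^ (-α)) (-α * z ^ (-α - 1)) (uIcc x y) z :=
    fun z hz => (Real.hasDerivAt_rpow_const (Or.inl (hmin.trans_le hz.1).ne')).hasDerivWithinAt
  have hbound : ∀ z ∈ uIcc x y, ‖-α * z ^ (-α - 1)‖ ≤ α * min x y ^ (-1 - α) := by
    intro z hz
    rw [norm_mul, norm_neg, Real.norm_of_nonneg hα.le,
      Real.norm_of_nonneg (Real.rpow_nonneg (hmin.trans_le hz.1).le _), neg_sub_comm]
    exact mul_le_mul_of_nonneg_left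
      (Real.rpow_le_rpow_of_nonpos hmin hz.1 (by linarith)) hα.le
  simpa [Real.norm_eq_abs] using Convex.norm_image_sub_le_of_norm_hasDerivWithin_le
    hderiv hbound (convex_uIcc x y) right_mem_uIcc left_mem_uIcc

lemma abs_sub_rpow_neg_le {α s u t : ℝ} (hα : 0 < α) (hst : s < t)
    (hs : s ≤ min u t - |u - t|) :
    |(u - s) ^ (-α) - (t - s) ^ (-α)| ≤ α * 2 ^ (1 + α) * (t - s) ^ (-1 - α) * |u - t| := by
  have hhalf : (t - s) / 2 ≤ min u t - s := by
    rcases min_cases u t with ⟨h, _⟩ | ⟨h, _⟩ <;>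
      rcases abs_cases (u - t) with ⟨h', _⟩ | ⟨h', _⟩ <;>
      rw [h] at hs ⊢ <;> rw [h'] at hs <;> linarith
  have hpos : 0 < (t - s) / 2 := by linarith
  have hus : 0 < u - s := by linarith [min_le_left u t]
  calc |(u - s) ^ (-α) - (t - s) ^ (-α)|
      ≤ α * min (u - s) (t - s) ^ (-1 - α) * |(u - s) - (t - s)| :=
        abs_rpow_neg_sub_rpow_neg_le hα hus (by linarith)
    _ ≤ α * ((t - s) / 2) ^ (-1 - α) * |u - t| := by
        rw [min_sub_sub_right, sub_sub_sub_cancel_right]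
        gcongr ?_ * _
        exact mul_le_mul_of_nonneg_left (Real.rpow_le_rpow_of_nonpos hpos hhalf (by linarith)) hα.le
    _ = α * 2 ^ (1 + α) * (t - s) ^ (-1 - α) * |u - t| := by
        rw [Real.div_rpow (by linarith) zero_le_two, div_eq_mul_inv,
          ← Real.rpow_neg zero_le_two, neg_sub', sub_neg_eq_add]
        ring_nf

lemma tendsto_min_sub_abs (t : ℝ) : Tendsto (fun u : ℝ => min u t - |u - t|) (𝓝 t) (𝓝 t) := by
  have h : Continuous fun u : ℝ => min u t - |u - t| := by fun_prop
  simpa using h.tendsto t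

variable {E : Type*} [NormedAddCommGroup E]

lemma exists_norm_sub_le_mul_abs_sub_rpow {F : ℝ → E} {β a t T M : ℝ} (hβ : 0 ≤ β)
    (hF : ContinuousOn F (Icc 0 T)) (ht : 0 ≤ t) (hat : a < t) (htT : t ≤ T)
    (hM : ∀ x ∈ Icc a T, ∀ y ∈ Icc a T, ‖F x - F y‖ ≤ M * |x - y| ^ β) :
    ∃ K, 0 ≤ K ∧ ∀ s ∈ Icc 0 T, ‖F t - F s‖ ≤ K * |t - s| ^ β := by
  obtain ⟨C, hC⟩ := isCompact_Icc.exists_bound_of_continuousOn hF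
  have hC0 : 0 ≤ C := (norm_nonneg _).trans (hC t ⟨ht, htT⟩)
  refine ⟨max M (2 * C * (t - a) ^ (-β)), le_max_of_le_right (by positivity), fun s hs => ?_⟩
  rcases le_or_gt a s with has | hsa
  · exact (hM t ⟨hat.le, htT⟩ s ⟨has, hs.2⟩).trans (by gcongr; exact le_max_left _ _)
  · have hta : 0 < t - a := sub_pos.2 hat
    calc ‖F t - F s‖ ≤ 2 * C := by linarith [norm_sub_le (F t) (F s), hC t ⟨ht, htT⟩, hC s hs]
      _ = 2 * C * (t - a) ^ (-β) * (t - a) ^ β := by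
        rw [mul_assoc, ← Real.rpow_add hta, neg_add_cancel, Real.rpow_zero, mul_one]
      _ ≤ max M (2 * C * (t - a) ^ (-β)) * |t - s| ^ β := by
        gcongr
        · exact le_max_right _ _
        · rw [abs_of_pos (by linarith)]; linarith

variable [NormedSpace ℝ E]

lemma norm_sub_rpow_smul_le {r b s J : ℝ} {x : E} (hsb : s ≤ b) (hx : ‖x‖ ≤ J) :
    ‖(b - s) ^ r • x‖ ≤ J * (b - s) ^ r := by
  rw [norm_smul_of_nonneg (Real.rpow_nonneg (sub_nonneg.2 hsb) r), mul_comm]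
  exact mul_le_mul_of_nonneg_right hx (Real.rpow_nonneg (sub_nonneg.2 hsb) r)

lemma integrableOn_Ioo_sub_rpow_smul {r a b J : ℝ} {G : ℝ → E} (hr : -1 < r)
    (hGm : AEStronglyMeasurable G (volume.restrict (Ioo a b)))
    (hJ : ∀ s ∈ Ioo a b, ‖G s‖ ≤ J) :
    IntegrableOn (fun s => (b - s) ^ r • G s) (Ioo a b) :=
  Integrable.mono' ((integrableOn_Ioo_sub_rpow hr).const_mul J)
    ((by fun_prop : Measurable fun s : ℝ => (b - s) ^ r).aestronglyMeasurable.smul hGm)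
    ((ae_restrict_iff' measurableSet_Ioo).2 <| ae_of_all _ fun s hs =>
      norm_sub_rpow_smul_le hs.2.le (hJ s hs))

lemma norm_integral_Ioo_sub_rpow_smul_le {r a b J : ℝ} {G : ℝ → E} (hr : -1 < r) (hab : a ≤ b)
    (hJ : ∀ s ∈ Ioo a b, ‖G s‖ ≤ J) :
    ‖∫ s in Ioo a b, (b - s) ^ r • G s‖ ≤ J * (b - a) ^ (r + 1) / (r + 1) :=
  calc ‖∫ s in Ioo a b, (b - s) ^ r • G s‖ ≤ ∫ s in Ioo a b, J * (b - s) ^ r :=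
        norm_integral_le_of_norm_le ((integrableOn_Ioo_sub_rpow hr).const_mul J)
          ((ae_restrict_iff' measurableSet_Ioo).2 <| ae_of_all _ fun s hs =>
            norm_sub_rpow_smul_le hs.2.le (hJ s hs))
    _ = J * (b - a) ^ (r + 1) / (r + 1) := by
        rw [integral_const_mul, integral_Ioo_sub_rpow hr hab, mul_div_assoc]

lemma integral_Ioo_sub_integral_Ioo {φ ψ : ℝ → E} {c u t : ℝ} (hc : 0 ≤ c) (hcu : c < u)
    (hct : c < t) (hφ : IntegrableOn φ (Ioo 0 u)) (hψ : IntegrableOn ψ (Ioo 0 t)) :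
    (∫ s in Ioo 0 u, φ s) - ∫ s in Ioo 0 t, ψ s =
      (∫ s in Ioo 0 t, (Ioc 0 c).indicator (φ - ψ) s) +
        ((∫ s in Ioo c u, φ s) - ∫ s in Ioo c t, ψ s) := by
  have hsplit : ∀ {v : ℝ} {f : ℝ → E}, c < v → IntegrableOn f (Ioo 0 v) →
      ∫ s in Ioo 0 v, f s = (∫ s in Ioc 0 c, f s) + ∫ s in Ioo c v, f s := by
    intro v f hcv hf
    rw [← Ioc_union_Ioo_eq_Ioo hc hcv] at hf ⊢
    exact setIntegral_union ((Ioc_disjoint_Ioc_of_le le_rfl).mono_right Ioo_subset_Ioc_self)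
      measurableSet_Ioo hf.left_of_union hf.right_of_union
  rw [hsplit hcu hφ, hsplit hct hψ, setIntegral_indicator measurableSet_Ioc,
    inter_eq_right.2 (Ioc_subset_Ioo_right hct), Pi.sub_def, integral_sub
      (hφ.mono_set (Ioc_subset_Ioo_right hcu)) (hψ.mono_set (Ioc_subset_Ioo_right hct))]
  abel

section VanishingAt

variable {G : ℝ → E} {α β K t T : ℝ}

lemma integrableOn_Ioo_sub_rpow_neg_one_sub_smul (hαβ : α < β) (htT : t ≤ T)
    (hGm : AEStronglyMeasurable G (volume.restrict (Ioo 0 T)))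
    (hG : ∀ s ∈ Ioo 0 T, ‖G s‖ ≤ K * |t - s| ^ β) :
    IntegrableOn (fun s => (t - s) ^ (-1 - α) • G s) (Ioo 0 t) := by
  refine Integrable.mono' ((integrableOn_Ioo_sub_rpow (r := β - 1 - α) (by linarith)).const_mul K)
    ((by fun_prop : Measurable fun s : ℝ => (t - s) ^ (-1 - α)).aestronglyMeasurable.smul
      (hGm.mono_set (Ioo_subset_Ioo_right htT)))
    ((ae_restrict_iff' measurableSet_Ioo).2 <| ae_of_all _ fun s hs => ?_)
  have hts : 0 < t - s := sub_pos.2 hs.2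
  calc ‖(t - s) ^ (-1 - α) • G s‖ ≤ K * (t - s) ^ β * (t - s) ^ (-1 - α) := by
        simpa [abs_of_pos hts] using norm_sub_rpow_smul_le hs.2.le
          (hG s ⟨hs.1, hs.2.trans_le htT⟩) (r := -1 - α)
    _ = K * (t - s) ^ (β - 1 - α) := by
        rw [mul_assoc, ← Real.rpow_add hts]
        ring_nf

lemma integrableOn_Ioo_sub_rpow_neg_smul {u : ℝ} (hα1 : α < 1) (hβ : 0 ≤ β) (hK : 0 ≤ K)
    (ht : 0 ≤ t) (htT : t ≤ T) (huT : u ≤ T)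
    (hGm : AEStronglyMeasurable G (volume.restrict (Ioo 0 T)))
    (hG : ∀ s ∈ Ioo 0 T, ‖G s‖ ≤ K * |t - s| ^ β) :
    IntegrableOn (fun s => (u - s) ^ (-α) • G s) (Ioo 0 u) := by
  refine integrableOn_Ioo_sub_rpow_smul (J := K * T ^ β) (by linarith)
    (hGm.mono_set (Ioo_subset_Ioo_right huT)) fun s hs => ?_
  refine (hG s ⟨hs.1, hs.2.trans_le huT⟩).trans ?_
  gcongr
  rw [abs_sub_le_iff]
  constructor <;> linarith [hs.1, hs.2]

lemma norm_slope_sub_rpow_smul_le {s u : ℝ} (hα : 0 < α) (htT : t ≤ T)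
    (hG : ∀ s ∈ Ioo 0 T, ‖G s‖ ≤ K * |t - s| ^ β) (hu : u ≠ t)
    (hs : s ∈ Ioc 0 (min u t - |u - t|)) :
    ‖slope (fun x => (x - s) ^ (-α) • G s) t u‖ ≤ α * 2 ^ (1 + α) * K * (t - s) ^ (β - 1 - α) := by
  have hut : 0 < |u - t| := abs_pos.2 (sub_ne_zero.2 hu)
  have hst : s < t := by linarith [hs.2, min_le_right u t]
  have hts : 0 < t - s := sub_pos.2 hst
  have hGs : ‖G s‖ ≤ K * (t - s) ^ β := by
    simpa [abs_of_pos hts] using hG s ⟨hs.1, hst.trans_le htT⟩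
  rw [slope_def_module, ← sub_smul, smul_smul, norm_smul, Real.norm_eq_abs, abs_mul, abs_inv]
  calc |u - t|⁻¹ * |(u - s) ^ (-α) - (t - s) ^ (-α)| * ‖G s‖
      ≤ |u - t|⁻¹ * (α * 2 ^ (1 + α) * (t - s) ^ (-1 - α) * |u - t|) * (K * (t - s) ^ β) := by
        gcongr
        exact abs_sub_rpow_neg_le hα hst hs.2
    _ = α * 2 ^ (1 + α) * K * (t - s) ^ (β - 1 - α) := by
        rw [show β - 1 - α = (-1 - α) + β by ring, Real.rpow_add hts]
        field_simp

lemma tendsto_integral_indicator_slope_sub_rpow_smul (hα : 0 < α) (hαβ : α < β) (hK : 0 ≤ K)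
    (htT : t ≤ T)
    (hGm : AEStronglyMeasurable G (volume.restrict (Ioo 0 T)))
    (hG : ∀ s ∈ Ioo 0 T, ‖G s‖ ≤ K * |t - s| ^ β) :
    Tendsto (fun u => ∫ s in Ioo 0 t, (Ioc 0 (min u t - |u - t|)).indicator
        (fun s => slope (fun x => (x - s) ^ (-α) • G s) t u) s) (𝓝[≠] t)
      (𝓝 (∫ s in Ioo 0 t, (-α * (t - s) ^ (-1 - α)) • G s)) := by
  refine tendsto_integral_filter_of_dominated_convergence
    (fun s => α * 2 ^ (1 + α) * K * (t - s) ^ (β - 1 - α)) (Eventually.of_forall fun u => ?_)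
    (eventually_mem_nhdsWithin.mono fun u hu => ?_)
    ((integrableOn_Ioo_sub_rpow (by linarith)).const_mul _)
    ((ae_restrict_iff' measurableSet_Ioo).2 <| ae_of_all _ fun s hs => ?_)
  · simp only [slope_def_module, ← sub_smul, smul_smul]
    exact ((by fun_prop : Measurable fun s : ℝ => (u - t)⁻¹ * ((u - s) ^ (-α) - (t - s) ^ (-α))
      ).aestronglyMeasurable.smul (hGm.mono_set (Ioo_subset_Ioo_right htT))).indicator
      measurableSet_Ioc
  · refine (ae_restrict_iff' measurableSet_Ioo).2 <| ae_of_all _ fun s hs => ?_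
    by_cases hsc : s ∈ Ioc 0 (min u t - |u - t|)
    · rw [indicator_of_mem hsc]
      exact norm_slope_sub_rpow_smul_le hα htT hG hu hsc
    · rw [indicator_of_notMem hsc, norm_zero]
      have : 0 < t - s := sub_pos.2 hs.2
      positivity
  · have hderiv :
        HasDerivAt (fun x => (x - s) ^ (-α) • G s) ((-α * (t - s) ^ (-1 - α)) • G s) t := by
      have h := (Real.hasDerivAt_rpow_const (p := -α) (Or.inl (sub_pos.2 hs.2).ne')).comp t
        ((hasDerivAt_id t).sub_const s)
      rw [show -α - 1 = -1 - α by ring] at h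
      simpa using h.smul_const (G s)
    have hmem : ∀ᶠ u in 𝓝[≠] t, s ∈ Ioc 0 (min u t - |u - t|) :=
      (tendsto_min_sub_abs t).eventually (eventually_gt_nhds hs.2) |>.filter_mono
        nhdsWithin_le_nhds |>.mono fun u hu => ⟨hs.1, hu.le⟩
    exact (hasDerivAt_iff_tendsto_slope.1 hderiv).congr' <|
      hmem.mono fun u hu => (indicator_of_mem hu _).symm

lemma norm_integral_Ioo_min_sub_abs_le {u v : ℝ} (hα1 : α < 1) (hβ : 0 ≤ β) (hK : 0 ≤ K)
    (hG : ∀ s ∈ Ioo 0 T, ‖G s‖ ≤ K * |t - s| ^ β) (hc : 0 ≤ min u t - |u - t|)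
    (hv : min u t ≤ v) (hv' : v ≤ max u t) (hvT : v ≤ T) :
    ‖∫ s in Ioo (min u t - |u - t|) v, (v - s) ^ (-α) • G s‖ ≤
      K / (1 - α) * (2 * |u - t|) ^ (1 + β - α) := by
  have hmax : max u t = min u t + |u - t| := by rw [← max_sub_min_eq_abs']; ring
  have hJ : ∀ s ∈ Ioo (min u t - |u - t|) v, ‖G s‖ ≤ K * (2 * |u - t|) ^ β := by
    intro s hs
    refine (hG s ⟨hc.trans_lt hs.1, hs.2.trans_le hvT⟩).trans ?_
    gcongr
    rw [abs_sub_le_iff]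
    constructor <;> linarith [hs.1, hs.2, min_le_right u t, le_max_right u t]
  calc ‖∫ s in Ioo (min u t - |u - t|) v, (v - s) ^ (-α) • G s‖
      ≤ K * (2 * |u - t|) ^ β * (v - (min u t - |u - t|)) ^ (-α + 1) / (-α + 1) :=
        norm_integral_Ioo_sub_rpow_smul_le (by linarith) (by linarith) hJ
    _ ≤ K * (2 * |u - t|) ^ β * (2 * |u - t|) ^ (-α + 1) / (-α + 1) := by
        gcongr <;> linarith
    _ = K / (1 - α) * (2 * |u - t|) ^ (1 + β - α) := by
        rw [mul_assoc, ← Real.rpow_add' (by positivity) (by linarith)]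
        ring_nf

lemma tendsto_inv_smul_integral_Ioo_min_sub_abs {v : ℝ → ℝ} (hα1 : α < 1) (hαβ : α < β)
    (hβ : 0 ≤ β) (hK : 0 ≤ K) (ht : 0 < t) (htT : t < T)
    (hG : ∀ s ∈ Ioo 0 T, ‖G s‖ ≤ K * |t - s| ^ β)
    (hv : ∀ u, min u t ≤ v u ∧ v u ≤ max u t) :
    Tendsto (fun u => (u - t)⁻¹ • ∫ s in Ioo (min u t - |u - t|) (v u), (v u - s) ^ (-α) • G s)
      (𝓝[≠] t) (𝓝 0) := by
  have hbound : ∀ᶠ u in 𝓝[≠] t,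
      ‖(u - t)⁻¹ • ∫ s in Ioo (min u t - |u - t|) (v u), (v u - s) ^ (-α) • G s‖ ≤
        K / (1 - α) * 2 ^ (1 + β - α) * |u - t| ^ (β - α) := by
    filter_upwards [self_mem_nhdsWithin, nhdsWithin_le_nhds
      ((tendsto_min_sub_abs t).eventually (eventually_gt_nhds ht)),
      nhdsWithin_le_nhds (eventually_lt_nhds htT)] with u hu hc huT
    have hut : 0 < |u - t| := abs_pos.2 (sub_ne_zero.2 hu)
    rw [norm_smul, norm_inv, Real.norm_eq_abs]
    calc |u - t|⁻¹ * ‖∫ s in Ioo (min u t - |u - t|) (v u), (v u - s) ^ (-α) • G s‖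
        ≤ |u - t|⁻¹ * (K / (1 - α) * (2 * |u - t|) ^ (1 + β - α)) := by
          gcongr
          exact norm_integral_Ioo_min_sub_abs_le hα1 hβ hK hG hc.le (hv u).1 (hv u).2
            ((hv u).2.trans (max_lt huT htT).le)
      _ = K / (1 - α) * 2 ^ (1 + β - α) * |u - t| ^ (β - α) := by
          rw [Real.mul_rpow zero_le_two hut.le, show 1 + β - α = 1 + (β - α) by ring,
            Real.rpow_one_add' hut.le (by linarith)]
          field_simp
  refine squeeze_zero_norm' hbound ?_
  have hcont : Continuous fun u : ℝ => K / (1 - α) * 2 ^ (1 + β - α) * |u - t| ^ (β - α) :=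
    continuous_const.mul ((continuous_sub_right t).abs.rpow_const fun _ => Or.inr (by linarith))
  simpa [Real.zero_rpow (sub_pos.2 hαβ).ne'] using (hcont.tendsto t).mono_left nhdsWithin_le_nhds

theorem hasDerivAt_integral_Ioo_sub_rpow_neg_smul (hα : 0 < α) (hα1 : α < 1) (hαβ : α < β)
    (hK : 0 ≤ K) (ht : 0 < t) (htT : t < T)
    (hGm : AEStronglyMeasurable G (volume.restrict (Ioo 0 T)))
    (hG : ∀ s ∈ Ioo 0 T, ‖G s‖ ≤ K * |t - s| ^ β) :
    HasDerivAt (fun u => ∫ s in Ioo 0 u, (u - s) ^ (-α) • G s)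
      ((-α) • ∫ s in Ioo 0 t, (t - s) ^ (-1 - α) • G s) t := by
  have hβ : 0 ≤ β := (hα.trans hαβ).le
  have hint : ∀ u ≤ T, IntegrableOn (fun s => (u - s) ^ (-α) • G s) (Ioo 0 u) := fun u hu =>
    integrableOn_Ioo_sub_rpow_neg_smul hα1 hβ hK ht.le htT.le hu hGm hG
  have hsplit : ∀ᶠ u in 𝓝[≠] t, slope (fun u => ∫ s in Ioo 0 u, (u - s) ^ (-α) • G s) t u =
      (∫ s in Ioo 0 t, (Ioc 0 (min u t - |u - t|)).indicator
        (fun s => slope (fun x => (x - s) ^ (-α) • G s) t u) s) +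
      ((u - t)⁻¹ • (∫ s in Ioo (min u t - |u - t|) u, (u - s) ^ (-α) • G s) -
        (u - t)⁻¹ • ∫ s in Ioo (min u t - |u - t|) t, (t - s) ^ (-α) • G s) := by
    filter_upwards [self_mem_nhdsWithin, nhdsWithin_le_nhds
      ((tendsto_min_sub_abs t).eventually (eventually_gt_nhds ht)),
      nhdsWithin_le_nhds (eventually_lt_nhds htT)] with u hu hc huT
    have hut : 0 < |u - t| := abs_pos.2 (sub_ne_zero.2 hu)
    rw [slope_def_module, integral_Ioo_sub_integral_Ioo hc.le
      (by linarith [min_le_left u t]) (by linarith [min_le_right u t]) (hint u huT.le)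
      (hint t htT.le), smul_add, smul_sub, ← integral_smul]
    simp only [← indicator_const_smul, slope_def_module, Pi.sub_apply]
  rw [hasDerivAt_iff_tendsto_slope, ← integral_smul]
  simp only [smul_smul]
  simpa using ((tendsto_integral_indicator_slope_sub_rpow_smul hα hαβ hK htT.le hGm hG).add
    ((tendsto_inv_smul_integral_Ioo_min_sub_abs (v := id) hα1 hαβ hβ hK ht htT hG
      fun u => ⟨min_le_left u t, le_max_left u t⟩).sub
    (tendsto_inv_smul_integral_Ioo_min_sub_abs (v := fun _ => t) hα1 hαβ hβ hK ht htT hG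
      fun u => ⟨min_le_right u t, le_max_right u t⟩))).congr' (hsplit.mono fun u hu => hu.symm)

end VanishingAt

theorem hasDerivAt_integral_Ioo_sub_rpow_neg_smul_of_holderAt [CompleteSpace E] {F : ℝ → E}
    {α β K t T : ℝ} (hα : 0 < α) (hα1 : α < 1) (hαβ : α < β) (hK : 0 ≤ K) (ht : 0 < t) (htT : t < T)
    (hFm : AEStronglyMeasurable F (volume.restrict (Ioo 0 T)))
    (hF : ∀ s ∈ Ioo 0 T, ‖F t - F s‖ ≤ K * |t - s| ^ β) :
    HasDerivAt (fun u => ∫ s in Ioo 0 u, (u - s) ^ (-α) • F s)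
      (t ^ (-α) • F t + α • ∫ s in Ioo 0 t, (t - s) ^ (-1 - α) • (F t - F s)) t := by
  have hpow : HasDerivAt (fun u => (u ^ (1 - α) / (1 - α)) • F t) (t ^ (-α) • F t) t := by
    have h := ((Real.hasDerivAt_rpow_const (p := 1 - α) (Or.inl ht.ne')).div_const (1 - α))
    rw [sub_sub_cancel_left, mul_div_cancel_left₀ _ (by linarith)] at h
    exact h.smul_const (F t)
  have hdiff : ∀ᶠ u in 𝓝 t, ∫ s in Ioo 0 u, (u - s) ^ (-α) • F s =
      (u ^ (1 - α) / (1 - α)) • F t - ∫ s in Ioo 0 u, (u - s) ^ (-α) • (F t - F s) := by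
    filter_upwards [Ioo_mem_nhds ht htT] with u hu
    have hI := integral_Ioo_sub_rpow (r := -α) (by linarith) hu.1.le
    rw [sub_zero, show -α + 1 = 1 - α by ring] at hI
    rw [← hI, ← integral_smul_const, ← integral_sub
      ((integrableOn_Ioo_sub_rpow (r := -α) (by linarith)).smul_const (F t))
      (integrableOn_Ioo_sub_rpow_neg_smul (G := fun s => F t - F s) hα1 (hα.trans hαβ).le hK
        ht.le htT.le hu.2.le (aestronglyMeasurable_const.sub hFm) hF)]
    simp_rw [← smul_sub, sub_sub_cancel]
  have h := hpow.sub (hasDerivAt_integral_Ioo_sub_rpow_neg_smul hα hα1 hαβ hK ht htT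
    (aestronglyMeasurable_const.sub hFm) hF)
  rw [neg_smul, sub_neg_eq_add] at h
  exact h.congr_of_eventuallyEq hdiff

theorem stmt9 (β : ℝ) (hβ : β ∈ Set.Ioc (0 : ℝ) 1) (F : ℝ → ℂ)
    (hFc : ContinuousOn F (Set.Ici 0))
    (hFh : ∀ a b : ℝ, 0 < a → a < b → ∃ M : ℝ,
      ∀ x ∈ Set.Icc a b, ∀ y ∈ Set.Icc a b, ‖F x - F y‖ ≤ M * |x - y| ^ β)
    (α : ℝ) (hα : α ∈ Set.Ioo 0 β) (t : ℝ) (ht : 0 < t) :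
    IntegrableOn (fun s : ℝ => ((t - s) ^ (-1 - α) : ℝ) • (F t - F s))
        (Set.Ioo 0 t) volume ∧
      HasDerivAt
        (fun u : ℝ => (Real.Gamma (1 - α))⁻¹ •
          ∫ s in Set.Ioo (0 : ℝ) u, ((u - s) ^ ((1 - α) - 1) : ℝ) • F s)
        ((Real.Gamma (1 - α))⁻¹ •
          ((t ^ (-α) : ℝ) • F t +
            α • ∫ s in Set.Ioo (0 : ℝ) t, ((t - s) ^ (-1 - α) : ℝ) • (F t - F s)))
        t := by
  obtain ⟨M, hM⟩ := hFh (t / 2) (t + 1) (by linarith) (by linarith)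
  obtain ⟨K, hK, hFt⟩ := exists_norm_sub_le_mul_abs_sub_rpow (hα.1.trans hα.2).le
    (hFc.mono Icc_subset_Ici_self) ht.le (by linarith) (by linarith) hM
  have hFm : AEStronglyMeasurable F (volume.restrict (Ioo 0 (t + 1))) :=
    (hFc.mono (Ioo_subset_Ioi_self.trans Ioi_subset_Ici_self)).aestronglyMeasurable
      measurableSet_Ioo
  have hF : ∀ s ∈ Ioo 0 (t + 1), ‖F t - F s‖ ≤ K * |t - s| ^ β :=
    fun s hs => hFt s (Ioo_subset_Icc_self hs)
  refine ⟨integrableOn_Ioo_sub_rpow_neg_one_sub_smul hα.2 (by linarith)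
    (aestronglyMeasurable_const.sub hFm) hF, ?_⟩
  rw [sub_sub_cancel_left]
  exact (hasDerivAt_integral_Ioo_sub_rpow_neg_smul_of_holderAt hα.1 (hα.2.trans_le hβ.2) hα.2 hK
    ht (by linarith) hFm hF).const_smul (Real.Gamma (1 - α))⁻¹
end

section
/- Let E ⊆ (0,∞) contain {2^j : j ∈ ℤ} and let β > 0. Suppose there exist a ∈ [0, 2β) and C > 0 such that N(E_j, δ) ≤ C δ^{−a} for all j ∈ ℤ and δ ∈ (0,1]. Then sup_{j ∈ ℤ} ∫_1^2 d(s, E_j)^{−1+2β} ds < ∞. -/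
open MeasureTheory
open scoped ENNReal

/-- `E_j := (2^{-j} E) ∩ [1,2]`. -/
def dilSet (E : Set ℝ) (j : ℤ) : Set ℝ :=
  {s : ℝ | (2 : ℝ) ^ j * s ∈ E} ∩ Set.Icc 1 2

/-- Covering bound: the measure of the `δ`-neighborhood of `F` inside `[1,2]` is at most
`5 δ` times the entropy number. -/
lemma measure_thick_le (F : Set ℝ) (hF : F ⊆ Set.Icc 1 2) (hne : F.Nonempty)
    (δ : ℝ) (hδ : 0 < δ) :
    volume {s ∈ Set.Icc (1:ℝ) 2 | Metric.infDist s F ≤ δ}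
      ≤ (entropyNum F δ) * ENNReal.ofReal (5 * δ) := by
  set K := {k : ℕ | (F ∩ Set.Icc (k * δ) ((k + 1) * δ)).Nonempty} with hK
  have hKfin : K.Finite := by
    apply Set.Finite.subset (Set.finite_Iic ⌈2/δ⌉₊)
    rintro k ⟨r, hrF, hr1, hr2⟩
    have hr2' : r ≤ 2 := (hF hrF).2
    have : (k:ℝ) ≤ 2/δ := by
      rw [le_div_iff₀ hδ]
      exact hr1.trans hr2'
    exact_mod_cast Nat.cast_le.mp (this.trans (Nat.le_ceil _))
  have hsub : {s ∈ Set.Icc (1:ℝ) 2 | Metric.infDist s F ≤ δ}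
      ⊆ ⋃ k ∈ hKfin.toFinset, Set.Icc ((k:ℝ)*δ - 2*δ) ((k+1)*δ + 2*δ) := by
    rintro s ⟨hs, hd⟩
    have hlt : Metric.infDist s F < 2*δ := hd.trans_lt (by linarith)
    obtain ⟨r, hrF, hsr⟩ := (Metric.infDist_lt_iff hne).mp hlt
    have hr0 : 0 ≤ r/δ := div_nonneg (le_trans (by norm_num) (hF hrF).1) hδ.le
    set k := ⌊r/δ⌋₊ with hk
    have h1 : (k:ℝ)*δ ≤ r := by
      have := Nat.floor_le hr0
      rw [le_div_iff₀ hδ] at this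
      linarith [this]
    have h2 : r ≤ ((k:ℝ)+1)*δ := by
      have := (Nat.lt_floor_add_one (r/δ)).le
      rw [div_le_iff₀ hδ] at this
      linarith [this]
    have hkK : k ∈ hKfin.toFinset := by
      rw [Set.Finite.mem_toFinset]
      exact ⟨r, hrF, by push_cast; constructor <;> linarith⟩
    apply Set.mem_biUnion hkK
    rw [Real.dist_eq, abs_lt] at hsr
    constructor <;> [skip; push_cast] <;> linarith
  calc volume {s ∈ Set.Icc (1:ℝ) 2 | Metric.infDist s F ≤ δ}
      ≤ volume (⋃ k ∈ hKfin.toFinset, Set.Icc ((k:ℝ)*δ - 2*δ) ((k+1)*δ + 2*δ)) :=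
        measure_mono hsub
    _ ≤ ∑ k ∈ hKfin.toFinset, volume (Set.Icc ((k:ℝ)*δ - 2*δ) ((k+1)*δ + 2*δ)) :=
        measure_biUnion_finset_le _ _
    _ = ∑ _k ∈ hKfin.toFinset, ENNReal.ofReal (5 * δ) := by
        apply Finset.sum_congr rfl
        intro k _
        rw [Real.volume_Icc]
        congr 1
        ring
    _ = (entropyNum F δ) * ENNReal.ofReal (5 * δ) := by
        rw [Finset.sum_const, nsmul_eq_mul]
        congr 1
        rw [entropyNum, Set.ncard_eq_toFinset_card _ hKfin]

/-- Every `d ∈ (0,1]` lies in a dyadic shell `((1/2)^{k+1},(1/2)^k]`. -/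
lemma exists_shell {d : ℝ} (hd0 : 0 < d) (hd1 : d ≤ 1) :
    ∃ k : ℕ, (1/2:ℝ)^(k+1) < d ∧ d ≤ (1/2:ℝ)^k := by
  have hex : ∃ n : ℕ, (1/2:ℝ)^n < d := exists_pow_lt_of_lt_one hd0 (by norm_num)
  classical
  have hnlt : (1/2:ℝ)^(Nat.find hex) < d := Nat.find_spec hex
  have hn0 : Nat.find hex ≠ 0 := by
    intro h
    rw [h] at hnlt
    simp at hnlt
    linarith
  obtain ⟨m, hm⟩ := Nat.exists_eq_succ_of_ne_zero hn0
  rw [hm] at hnlt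
  refine ⟨m, hnlt, ?_⟩
  have := Nat.find_min hex (m := m) (by omega)
  linarith [not_lt.mp this]

lemma shell_arith (β a C : ℝ) (k : ℕ) :
    ((1/2:ℝ)^(k+1)) ^ (-1+2*β) * (C * ((1/2:ℝ)^k) ^ (-a) * (5*(1/2:ℝ)^k)) =
    (5*C*(1/2:ℝ) ^ (-1+2*β)) * ((1/2:ℝ) ^ (2*β - a))^k := by
  have h : (0:ℝ) < 1/2 := by norm_num
  rw [← Real.rpow_natCast ((1/2:ℝ) ^ (2*β-a)) k,
      ← Real.rpow_natCast (1/2:ℝ) (k+1), ← Real.rpow_natCast (1/2:ℝ) k,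
      ← Real.rpow_mul h.le, ← Real.rpow_mul h.le, ← Real.rpow_mul h.le]
  push_cast
  calc (1/2:ℝ)^(((k:ℝ)+1)*(-1+2*β)) * (C * (1/2:ℝ)^((k:ℝ)*(-a)) * (5*(1/2:ℝ)^(k:ℝ)))
      = 5*C * ((1/2:ℝ)^(((k:ℝ)+1)*(-1+2*β)) * (1/2:ℝ)^((k:ℝ)*(-a)) * (1/2:ℝ)^(k:ℝ)) := by
        ring
    _ = 5*C * (1/2:ℝ)^(((k:ℝ)+1)*(-1+2*β) + (k:ℝ)*(-a) + (k:ℝ)) := by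
        rw [← Real.rpow_add h, ← Real.rpow_add h]
    _ = 5*C * (1/2:ℝ)^((-1+2*β) + (2*β-a)*(k:ℝ)) := by
        congr 1
        ring
    _ = (5*C*(1/2:ℝ) ^ (-1+2*β)) * (1/2:ℝ)^((2*β-a)*(k:ℝ)) := by
        rw [Real.rpow_add h]
        ring

theorem stmt12 (E : Set ℝ) (hE : E ⊆ Set.Ioi 0) (h2 : ∀ j : ℤ, (2 : ℝ) ^ j ∈ E)
    (β : ℝ) (hβ : 0 < β) (a C : ℝ) (ha0 : 0 ≤ a) (ha : a < 2 * β) (hC : 0 < C)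
    (hN : ∀ j : ℤ, ∀ δ ∈ Set.Ioc (0 : ℝ) 1,
      (entropyNum (dilSet E j) δ : ℝ) ≤ C * δ ^ (-a)) :
    (⨆ j : ℤ, ∫⁻ s in Set.Icc (1 : ℝ) 2,
      ENNReal.ofReal (Metric.infDist s (dilSet E j) ^ (-1 + 2 * β))) < ⊤ := by
  have h1mem : ∀ j : ℤ, (1:ℝ) ∈ dilSet E j := by
    intro j
    refine ⟨?_, by norm_num⟩
    show (2:ℝ) ^ j * 1 ∈ E
    simpa using h2 j
  have hdle : ∀ (j : ℤ) (s : ℝ), s ∈ Set.Icc (1:ℝ) 2 →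
      Metric.infDist s (dilSet E j) ≤ 1 := by
    intro j s hs
    have h := Metric.infDist_le_dist_of_mem (x := s) (h1mem j)
    rw [Real.dist_eq] at h
    refine h.trans ?_
    rw [abs_le]
    exact ⟨by linarith [hs.1], by linarith [hs.2]⟩
  rcases le_or_gt 0 (-1 + 2*β) with hγ0 | hγ0
  · -- easy case: exponent nonnegative, integrand bounded by 1
    refine lt_of_le_of_lt (iSup_le fun j => ?_) (show (1:ℝ≥0∞) < ⊤ from ENNReal.one_lt_top)
    calc ∫⁻ s in Set.Icc (1:ℝ) 2,
          ENNReal.ofReal (Metric.infDist s (dilSet E j) ^ (-1 + 2*β))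
        ≤ ∫⁻ _ in Set.Icc (1:ℝ) 2, 1 := by
          apply setLIntegral_mono measurable_const
          intro x hx
          have h1 : Metric.infDist x (dilSet E j) ^ (-1+2*β) ≤ 1 :=
            Real.rpow_le_one Metric.infDist_nonneg (hdle j x hx) hγ0
          calc ENNReal.ofReal (Metric.infDist x (dilSet E j) ^ (-1+2*β))
              ≤ ENNReal.ofReal 1 := ENNReal.ofReal_le_ofReal h1
            _ = 1 := ENNReal.ofReal_one
      _ = 1 := by
          rw [setLIntegral_const, one_mul, Real.volume_Icc]
          norm_num
  · -- hard case: -1 + 2β < 0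
    have h2βa : 0 < 2*β - a := by linarith
    have hq1 : (1/2:ℝ) ^ (2*β - a) < 1 :=
      Real.rpow_lt_one (by norm_num) (by norm_num) h2βa
    have hq0 : 0 ≤ (1/2:ℝ) ^ (2*β - a) := Real.rpow_nonneg (by norm_num) _
    have hK0 : 0 ≤ 5*C*(1/2:ℝ) ^ (-1+2*β) := by positivity
    set M : ℝ≥0∞ := ENNReal.ofReal (5*C*(1/2:ℝ) ^ (-1+2*β)) *
      (1 - ENNReal.ofReal ((1/2:ℝ) ^ (2*β - a)))⁻¹ with hM
    have hMlt : M < ⊤ := by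
      apply ENNReal.mul_lt_top ENNReal.ofReal_lt_top
      rw [ENNReal.inv_lt_top]
      rw [tsub_pos_iff_lt]
      exact ENNReal.ofReal_lt_one.mpr hq1
    refine lt_of_le_of_lt (iSup_le fun j => ?_) hMlt
    set F := dilSet E j with hFdef
    set T : ℕ → Set ℝ := fun k => {s ∈ Set.Icc (1:ℝ) 2 |
      (1/2:ℝ)^(k+1) < Metric.infDist s F ∧ Metric.infDist s F ≤ (1/2:ℝ)^k} with hT
    have hcover : Set.Icc (1:ℝ) 2 ⊆ {s | Metric.infDist s F = 0} ∪ ⋃ k, T k := by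
      intro s hs
      rcases eq_or_lt_of_le (Metric.infDist_nonneg (x := s) (s := F)) with h0 | h0
      · exact Or.inl h0.symm
      · exact Or.inr (Set.mem_iUnion.mpr
          ((exists_shell h0 (hdle j s hs)).imp fun k hk => ⟨hs, hk.1, hk.2⟩))
    have hterm : ∀ k : ℕ,
        (∫⁻ s in T k, ENNReal.ofReal (Metric.infDist s F ^ (-1 + 2*β)))
          ≤ ENNReal.ofReal (5*C*(1/2:ℝ) ^ (-1+2*β)) *
            (ENNReal.ofReal ((1/2:ℝ) ^ (2*β - a)))^k := by
      intro k
      have hδk0 : (0:ℝ) < (1/2:ℝ)^k := by positivity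
      have hδk1 : ((1/2:ℝ)^k) ≤ 1 := pow_le_one₀ (by norm_num) (by norm_num)
      have hNk := hN j ((1/2:ℝ)^k) ⟨hδk0, hδk1⟩
      have hc0 : (0:ℝ) ≤ ((1/2:ℝ)^(k+1)) ^ (-1+2*β) := Real.rpow_nonneg (by positivity) _
      calc (∫⁻ s in T k, ENNReal.ofReal (Metric.infDist s F ^ (-1 + 2*β)))
          ≤ ∫⁻ _ in T k, ENNReal.ofReal (((1/2:ℝ)^(k+1)) ^ (-1+2*β)) := by
            apply setLIntegral_mono measurable_const
            rintro x ⟨_, hx1, _⟩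
            exact ENNReal.ofReal_le_ofReal
              (Real.rpow_le_rpow_of_nonpos (by positivity) hx1.le hγ0.le)
        _ = ENNReal.ofReal (((1/2:ℝ)^(k+1)) ^ (-1+2*β)) * volume (T k) :=
            setLIntegral_const _ _
        _ ≤ ENNReal.ofReal (((1/2:ℝ)^(k+1)) ^ (-1+2*β)) *
            ((entropyNum F ((1/2:ℝ)^k)) * ENNReal.ofReal (5 * (1/2:ℝ)^k)) := by
            gcongr
            refine (measure_mono ?_).trans
              (measure_thick_le F Set.inter_subset_right ⟨1, h1mem j⟩ _ hδk0)
            rintro x ⟨hx, _, hx2⟩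
            exact ⟨hx, hx2⟩
        _ ≤ ENNReal.ofReal (((1/2:ℝ)^(k+1)) ^ (-1+2*β)) *
            (ENNReal.ofReal (C * ((1/2:ℝ)^k) ^ (-a)) * ENNReal.ofReal (5 * (1/2:ℝ)^k)) := by
            gcongr
            rw [← ENNReal.ofReal_natCast]
            exact ENNReal.ofReal_le_ofReal hNk
        _ = ENNReal.ofReal (((1/2:ℝ)^(k+1)) ^ (-1+2*β) *
              (C * ((1/2:ℝ)^k) ^ (-a) * (5 * (1/2:ℝ)^k))) := by
            rw [← ENNReal.ofReal_mul (by positivity : (0:ℝ) ≤ C * ((1/2:ℝ)^k) ^ (-a)),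
              ← ENNReal.ofReal_mul hc0]
        _ = ENNReal.ofReal ((5*C*(1/2:ℝ) ^ (-1+2*β)) * ((1/2:ℝ) ^ (2*β - a))^k) := by
            rw [shell_arith]
        _ = ENNReal.ofReal (5*C*(1/2:ℝ) ^ (-1+2*β)) *
            (ENNReal.ofReal ((1/2:ℝ) ^ (2*β - a)))^k := by
            rw [ENNReal.ofReal_mul hK0, ENNReal.ofReal_pow hq0]
    calc ∫⁻ s in Set.Icc (1:ℝ) 2, ENNReal.ofReal (Metric.infDist s F ^ (-1 + 2*β))
        ≤ ∫⁻ s in ({s | Metric.infDist s F = 0} ∪ ⋃ k, T k),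
            ENNReal.ofReal (Metric.infDist s F ^ (-1 + 2*β)) :=
          lintegral_mono_set hcover
      _ ≤ (∫⁻ s in {s | Metric.infDist s F = 0},
            ENNReal.ofReal (Metric.infDist s F ^ (-1 + 2*β))) +
          ∫⁻ s in ⋃ k, T k, ENNReal.ofReal (Metric.infDist s F ^ (-1 + 2*β)) :=
          lintegral_union_le _ _ _
      _ ≤ 0 + ∑' k, ∫⁻ s in T k, ENNReal.ofReal (Metric.infDist s F ^ (-1 + 2*β)) := by
          gcongr
          · calc (∫⁻ s in {s | Metric.infDist s F = 0},
                ENNReal.ofReal (Metric.infDist s F ^ (-1 + 2*β)))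
                ≤ ∫⁻ _ in {s | Metric.infDist s F = 0}, 0 := by
                  apply setLIntegral_mono measurable_const
                  intro x hx
                  have hx0 : Metric.infDist x F = 0 := hx
                  rw [hx0, Real.zero_rpow (by linarith)]
                  simp
              _ = 0 := by simp
          · exact lintegral_iUnion_le _ _
      _ ≤ ∑' k, ENNReal.ofReal (5*C*(1/2:ℝ) ^ (-1+2*β)) *
            (ENNReal.ofReal ((1/2:ℝ) ^ (2*β - a)))^k := by
          rw [zero_add]
          exact ENNReal.tsum_le_tsum hterm
      _ = M := by
          rw [ENNReal.tsum_mul_left, ENNReal.tsum_geometric]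
end

section
/- Let d ≥ 1, let E ⊆ (0,∞) contain {2^j : j ∈ ℤ}, let β > 0, and suppose A := sup_{j ∈ ℤ} ∫_1^2 d(s, E_j)^{−1+2β} ds < ∞. Let g : ℝ^d → ℂ be bounded and supported in the annulus {1/4 ≤ |ξ| ≤ 4}. Then there is a constant C depending only on d such that for every measurable m : ℝ^d → ℂ, sup_{k ∈ ℤ} ∫_{ℝ^d} ( ∑_{j ∈ ℤ} ∫_1^2 d(s, E_j)^{−1+2β} |m(2^{j+k} s ξ)|^2 ds ) |g(ξ)|^2 dξ ≤ C A (sup_ξ |g(ξ)|)^2 ∫_{ℝ^d} |m(ξ)|^2 |ξ|^{−d} dξ. -/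
/-! Swap the order of integration. For fixed `j` and `s ∈ [1,2]`, the substitution
`η = 2^(j+k) s ξ` maps the annulus `1/4 ≤ ‖ξ‖ ≤ 4` into the dyadic shell
`2^(j+k-2) ≤ ‖η‖ ≤ 2^(j+k+3)`, and `dξ = (2^(j+k) s)^(-d) dη ≤ 4^d ‖η‖^(-d) dη` there.
So the `j`-th term is bounded by `4^d A sup|g|²` times the integral of `|m|² ‖η‖^(-d)` over
that shell. Each `η ≠ 0` lies in at most six of these shells, whence `C = 6 · 4^d`. -/

open MeasureTheory
open scoped ENNReal NNReal

open Module

section Annulus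

variable {E : Type*} [NormedAddCommGroup E]

def annulus (a b : ℝ) : Set E := {x | ‖x‖ ∈ Set.Icc a b}

lemma measurableSet_annulus [MeasurableSpace E] [OpensMeasurableSpace E] (a b : ℝ) :
    MeasurableSet (annulus a b : Set E) :=
  measurable_norm measurableSet_Icc

lemma annulus_subset_annulus {a a' b b' : ℝ} (ha : a' ≤ a) (hb : b ≤ b') :
    (annulus a b : Set E) ⊆ annulus a' b' :=
  fun _ hx => ⟨ha.trans hx.1, hx.2.trans hb⟩

lemma smul_mem_annulus_iff [NormedSpace ℝ E] {c : ℝ} (hc : 0 < c) {a b : ℝ} {x : E} :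
    c • x ∈ annulus (c * a) (c * b) ↔ x ∈ annulus a b := by
  simp only [annulus, Set.mem_ofPred_eq, Set.mem_Icc, norm_smul, Real.norm_of_nonneg hc.le,
    mul_le_mul_iff_right₀ hc]

lemma le_ofReal_pow_mul_mul_enorm_rpow_neg (n : ℕ) {y : E} {r : ℝ} (hr : 0 < r) (hy : ‖y‖ ≤ r)
    (t : ℝ≥0∞) :
    t ≤ ENNReal.ofReal r ^ n * (t * ‖y‖ₑ ^ (-(n : ℝ))) := by
  have hR : ENNReal.ofReal r ^ n ≠ 0 := pow_ne_zero _ (by simpa using hr)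
  have hR' : ENNReal.ofReal r ^ n ≠ ⊤ := ENNReal.pow_ne_top ENNReal.ofReal_ne_top
  have hy' : ‖y‖ₑ ^ n ≤ ENNReal.ofReal r ^ n := by
    gcongr
    rw [← ofReal_norm]
    exact ENNReal.ofReal_le_ofReal hy
  calc t = t * (ENNReal.ofReal r ^ n * (ENNReal.ofReal r ^ n)⁻¹) := by
        rw [ENNReal.mul_inv_cancel hR hR', mul_one]
    _ ≤ t * (ENNReal.ofReal r ^ n * (‖y‖ₑ ^ n)⁻¹) := by gcongr
    _ = ENNReal.ofReal r ^ n * (t * ‖y‖ₑ ^ (-(n : ℝ))) := by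
        rw [ENNReal.rpow_neg, ENNReal.rpow_natCast]
        ring

lemma tsum_indicator_annulus_zpow_le (f : E → ℝ≥0∞) (x : E) :
    ∑' j : ℤ, (annulus ((2 : ℝ) ^ (j - 2)) (2 ^ (j + 3))).indicator f x ≤ 6 * f x := by
  rcases (norm_nonneg x).eq_or_lt with hx | hx
  · have hzero : ∀ j : ℤ, (annulus ((2 : ℝ) ^ (j - 2)) (2 ^ (j + 3))).indicator f x = 0 :=
      fun j => Set.indicator_of_notMem (fun hmem => (zpow_pos two_pos (j - 2)).not_ge
        (hx ▸ hmem.1)) f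
    simp only [hzero, tsum_zero, zero_le]
  set L := Int.log 2 ‖x‖
  have hsupp : ∀ j ∉ Finset.Icc (L - 3) (L + 2),
      (annulus ((2 : ℝ) ^ (j - 2)) (2 ^ (j + 3))).indicator f x = 0 := by
    intro j hj
    refine Set.indicator_of_notMem (fun hmem => hj ?_) f
    have hlow : j - 2 ≤ L := (Int.zpow_le_iff_le_log (b := 2) one_lt_two hx).mp (mod_cast hmem.1)
    have hhigh : L < j + 4 := (Int.lt_zpow_iff_log_lt (b := 2) one_lt_two hx).mp
      (mod_cast hmem.2.trans_lt (zpow_lt_zpow_right₀ one_lt_two (by omega)))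
    rw [Finset.mem_Icc]
    omega
  calc ∑' j : ℤ, (annulus ((2 : ℝ) ^ (j - 2)) (2 ^ (j + 3))).indicator f x
      = ∑ j ∈ Finset.Icc (L - 3) (L + 2),
          (annulus ((2 : ℝ) ^ (j - 2)) (2 ^ (j + 3))).indicator f x := tsum_eq_sum hsupp
    _ ≤ ∑ _j ∈ Finset.Icc (L - 3) (L + 2), f x :=
        Finset.sum_le_sum fun j _ => Set.indicator_le_self _ f x
    _ = 6 * f x := by
        rw [Finset.sum_const, Int.card_Icc, show L + 2 + 1 - (L - 3) = 6 by ring, nsmul_eq_mul]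
        simp

lemma tsum_setLIntegral_annulus_zpow_le [MeasurableSpace E] [OpensMeasurableSpace E]
    (μ : Measure E) {f : E → ℝ≥0∞} (hf : Measurable f) :
    ∑' j : ℤ, ∫⁻ x in annulus ((2 : ℝ) ^ (j - 2)) (2 ^ (j + 3)), f x ∂μ ≤ 6 * ∫⁻ x, f x ∂μ := by
  calc ∑' j : ℤ, ∫⁻ x in annulus ((2 : ℝ) ^ (j - 2)) (2 ^ (j + 3)), f x ∂μ
      = ∫⁻ x, ∑' j : ℤ, (annulus ((2 : ℝ) ^ (j - 2)) (2 ^ (j + 3))).indicator f x ∂μ := by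
        rw [lintegral_tsum fun j => (hf.indicator (measurableSet_annulus _ _)).aemeasurable]
        simp only [lintegral_indicator (measurableSet_annulus _ _)]
    _ ≤ ∫⁻ x, 6 * f x ∂μ := lintegral_mono fun x => tsum_indicator_annulus_zpow_le f x
    _ = 6 * ∫⁻ x, f x ∂μ := lintegral_const_mul _ hf

end Annulus

section AddHaar

variable {E : Type*} [NormedAddCommGroup E] [NormedSpace ℝ E] [FiniteDimensional ℝ E]
  [MeasurableSpace E] [BorelSpace E] (μ : Measure E) [μ.IsAddHaarMeasure]

lemma setLIntegral_annulus_comp_smul {f : E → ℝ≥0∞} (hf : Measurable f) {c : ℝ} (hc : 0 < c)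
    (a b : ℝ) :
    ∫⁻ x in annulus a b, f (c • x) ∂μ =
      ENNReal.ofReal (c ^ finrank ℝ E)⁻¹ * ∫⁻ y in annulus (c * a) (c * b), f y ∂μ := by
  have hpre : (c • ·) ⁻¹' annulus (c * a) (c * b) = (annulus a b : Set E) :=
    Set.ext fun _ => smul_mem_annulus_iff hc
  rw [← hpre, ← setLIntegral_map (measurableSet_annulus _ _) hf (measurable_const_smul c),
    Measure.map_addHaar_smul μ hc.ne', Measure.restrict_smul, lintegral_smul_measure,
    abs_of_pos (by positivity), smul_eq_mul]

lemma setLIntegral_annulus_comp_smul_le {f : E → ℝ≥0∞} (hf : Measurable f) {c : ℝ} (hc : 0 < c)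
    (a : ℝ) {b : ℝ} (hb : 0 < b) :
    ∫⁻ x in annulus a b, f (c • x) ∂μ ≤
      ENNReal.ofReal b ^ finrank ℝ E *
        ∫⁻ y in annulus (c * a) (c * b), f y * ‖y‖ₑ ^ (-(finrank ℝ E : ℝ)) ∂μ := by
  set n := finrank ℝ E
  have hcb : 0 < c * b := mul_pos hc hb
  have hweight : ∫⁻ y in annulus (c * a) (c * b), f y ∂μ ≤
      ENNReal.ofReal (c * b) ^ n * ∫⁻ y in annulus (c * a) (c * b), f y * ‖y‖ₑ ^ (-(n : ℝ)) ∂μ := by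
    rw [← lintegral_const_mul' _ _ (ENNReal.pow_ne_top ENNReal.ofReal_ne_top)]
    exact setLIntegral_mono' (measurableSet_annulus _ _) fun y hy =>
      le_ofReal_pow_mul_mul_enorm_rpow_neg n hcb hy.2 _
  have hconst : ENNReal.ofReal (c ^ n)⁻¹ * ENNReal.ofReal (c * b) ^ n = ENNReal.ofReal b ^ n := by
    rw [← ENNReal.ofReal_pow hcb.le, ← ENNReal.ofReal_mul (by positivity), mul_pow,
      inv_mul_cancel_left₀ (by positivity), ENNReal.ofReal_pow hb.le]
  calc ∫⁻ x in annulus a b, f (c • x) ∂μ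
      = ENNReal.ofReal (c ^ n)⁻¹ * ∫⁻ y in annulus (c * a) (c * b), f y ∂μ :=
        setLIntegral_annulus_comp_smul μ hf hc a b
    _ ≤ ENNReal.ofReal (c ^ n)⁻¹ * (ENNReal.ofReal (c * b) ^ n *
          ∫⁻ y in annulus (c * a) (c * b), f y * ‖y‖ₑ ^ (-(n : ℝ)) ∂μ) := by gcongr
    _ = _ := by rw [← mul_assoc, hconst]

lemma setLIntegral_annulus_average_comp_smul_le {w : ℝ → ℝ≥0∞} (hw : Measurable w)
    {F : E → ℝ≥0∞} (hF : Measurable F) (i : ℤ) :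
    ∫⁻ ξ in annulus (1 / 4) 4, (∫⁻ s in Set.Icc (1 : ℝ) 2, w s * F (((2 : ℝ) ^ i * s) • ξ)) ∂μ ≤
      4 ^ finrank ℝ E * (∫⁻ s in Set.Icc (1 : ℝ) 2, w s) *
        ∫⁻ η in annulus ((2 : ℝ) ^ (i - 2)) (2 ^ (i + 3)),
          F η * ‖η‖ₑ ^ (-(finrank ℝ E : ℝ)) ∂μ := by
  set n := finrank ℝ E
  set K := ∫⁻ η in annulus ((2 : ℝ) ^ (i - 2)) (2 ^ (i + 3)), F η * ‖η‖ₑ ^ (-(n : ℝ)) ∂μ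
  have hjoint : Measurable (Function.uncurry fun (ξ : E) (s : ℝ) =>
      w s * F (((2 : ℝ) ^ i * s) • ξ)) := by
    fun_prop
  have hinner : ∀ s ∈ Set.Icc (1 : ℝ) 2,
      ∫⁻ ξ in annulus (1 / 4) 4, w s * F (((2 : ℝ) ^ i * s) • ξ) ∂μ ≤ w s * (4 ^ n * K) := by
    intro s hs
    have hc : 0 < (2 : ℝ) ^ i * s := by have := hs.1; positivity
    have hlow : (2 : ℝ) ^ (i - 2) ≤ (2 ^ i * s) * (1 / 4) := by
      rw [zpow_sub₀ two_ne_zero]; nlinarith [hs.1, zpow_pos (two_pos (α := ℝ)) i]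
    have hhigh : (2 ^ i * s) * 4 ≤ (2 : ℝ) ^ (i + 3) := by
      rw [zpow_add₀ two_ne_zero]; nlinarith [hs.2, zpow_pos (two_pos (α := ℝ)) i]
    rw [lintegral_const_mul _ (by fun_prop)]
    gcongr
    calc ∫⁻ ξ in annulus (1 / 4) 4, F (((2 : ℝ) ^ i * s) • ξ) ∂μ
        ≤ ENNReal.ofReal 4 ^ n * ∫⁻ η in annulus ((2 ^ i * s) * (1 / 4)) ((2 ^ i * s) * 4),
            F η * ‖η‖ₑ ^ (-(n : ℝ)) ∂μ := setLIntegral_annulus_comp_smul_le μ hF hc _ four_pos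
      _ ≤ 4 ^ n * K := by
        rw [ENNReal.ofReal_ofNat]
        exact mul_le_mul_right (lintegral_mono_set (annulus_subset_annulus hlow hhigh)) _
  calc ∫⁻ ξ in annulus (1 / 4) 4, (∫⁻ s in Set.Icc (1 : ℝ) 2, w s * F (((2 : ℝ) ^ i * s) • ξ)) ∂μ
      = ∫⁻ s in Set.Icc (1 : ℝ) 2, ∫⁻ ξ in annulus (1 / 4) 4, w s * F (((2 : ℝ) ^ i * s) • ξ) ∂μ :=
        lintegral_lintegral_swap hjoint.aemeasurable
    _ ≤ ∫⁻ s in Set.Icc (1 : ℝ) 2, w s * (4 ^ n * K) := setLIntegral_mono' measurableSet_Icc hinner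
    _ = 4 ^ n * (∫⁻ s in Set.Icc (1 : ℝ) 2, w s) * K := by
        rw [lintegral_mul_const _ hw]; ring

theorem lintegral_tsum_dyadic_average_mul_le {w : ℤ → ℝ → ℝ≥0∞} (hw : ∀ j, Measurable (w j))
    {A : ℝ≥0∞} (hA : ∀ j, ∫⁻ s in Set.Icc (1 : ℝ) 2, w j s ≤ A) {F : E → ℝ≥0∞}
    (hF : Measurable F) {G : E → ℝ≥0∞} {B : ℝ≥0∞} (hGB : ∀ ξ, G ξ ≤ B)
    (hG : Function.support G ⊆ annulus (1 / 4) 4) (k : ℤ) :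
    ∫⁻ ξ, (∑' j : ℤ, ∫⁻ s in Set.Icc (1 : ℝ) 2, w j s * F (((2 : ℝ) ^ (j + k) * s) • ξ)) * G ξ ∂μ ≤
      6 * 4 ^ finrank ℝ E * A * B * ∫⁻ η, F η * ‖η‖ₑ ^ (-(finrank ℝ E : ℝ)) ∂μ := by
  set n := finrank ℝ E
  set I : ℤ → E → ℝ≥0∞ := fun j ξ =>
    ∫⁻ s in Set.Icc (1 : ℝ) 2, w j s * F (((2 : ℝ) ^ (j + k) * s) • ξ)
  have hI : ∀ j, Measurable (I j) := fun j =>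
    Measurable.lintegral_prod_right' (f := Function.uncurry fun (ξ : E) (s : ℝ) =>
      w j s * F (((2 : ℝ) ^ (j + k) * s) • ξ)) (by fun_prop)
  have hpt : ∀ ξ, (∑' j, I j ξ) * G ξ ≤
      (annulus (1 / 4) 4).indicator (fun ξ => ∑' j, I j ξ) ξ * B := by
    intro ξ
    by_cases hξ : ξ ∈ annulus (1 / 4) 4
    · rw [Set.indicator_of_mem hξ]
      gcongr
      exact hGB ξ
    · rw [Function.notMem_support.mp fun h => hξ (hG h), mul_zero]
      exact zero_le
  have hh : Measurable fun η : E => F η * ‖η‖ₑ ^ (-(n : ℝ)) := by fun_prop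
  calc ∫⁻ ξ, (∑' j, I j ξ) * G ξ ∂μ
      ≤ ∫⁻ ξ, (annulus (1 / 4) 4).indicator (fun ξ => ∑' j, I j ξ) ξ * B ∂μ := lintegral_mono hpt
    _ = (∑' j, ∫⁻ ξ in annulus (1 / 4) 4, I j ξ ∂μ) * B := by
        rw [lintegral_mul_const _ ((Measurable.tsum hI).indicator (measurableSet_annulus _ _)),
          lintegral_indicator (measurableSet_annulus _ _),
          lintegral_tsum fun j => (hI j).aemeasurable]
    _ ≤ (∑' j : ℤ, 4 ^ n * A * ∫⁻ η in annulus ((2 : ℝ) ^ (j + k - 2)) (2 ^ (j + k + 3)),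
          F η * ‖η‖ₑ ^ (-(n : ℝ)) ∂μ) * B := by
        gcongr with j
        exact (setLIntegral_annulus_average_comp_smul_le μ (hw j) hF (j + k)).trans
          (by gcongr; exact hA j)
    _ = 4 ^ n * A * (∑' j : ℤ, ∫⁻ η in annulus ((2 : ℝ) ^ (j - 2)) (2 ^ (j + 3)),
          F η * ‖η‖ₑ ^ (-(n : ℝ)) ∂μ) * B := by
        rw [ENNReal.tsum_mul_left]
        congr 2
        exact (Equiv.addRight k).tsum_eq fun j => ∫⁻ η in annulus ((2 : ℝ) ^ (j - 2)) (2 ^ (j + 3)),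
          F η * ‖η‖ₑ ^ (-(n : ℝ)) ∂μ
    _ ≤ 4 ^ n * A * (6 * ∫⁻ η, F η * ‖η‖ₑ ^ (-(n : ℝ)) ∂μ) * B := by
        gcongr
        exact tsum_setLIntegral_annulus_zpow_le μ hh
    _ = 6 * 4 ^ n * A * B * ∫⁻ η, F η * ‖η‖ₑ ^ (-(n : ℝ)) ∂μ := by ring

end AddHaar

theorem stmt14_general (d : ℕ) :
    ∃ C : ℝ, 0 < C ∧
      ∀ E : Set ℝ, E ⊆ Set.Ioi 0 → (∀ j : ℤ, (2 : ℝ) ^ j ∈ E) →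
      ∀ β : ℝ, 0 < β →
        (⨆ j : ℤ, ∫⁻ s in Set.Icc (1 : ℝ) 2,
          ENNReal.ofReal (Metric.infDist s (dilSet E j) ^ (-1 + 2 * β))) < ⊤ →
      ∀ g : EuclideanSpace ℝ (Fin d) → ℂ, (∃ M : ℝ, ∀ ξ, ‖g ξ‖ ≤ M) →
        (∀ ξ, g ξ ≠ 0 → ‖ξ‖ ∈ Set.Icc (1 / 4 : ℝ) 4) →
      ∀ m : EuclideanSpace ℝ (Fin d) → ℂ, Measurable m →
        (⨆ k : ℤ, ∫⁻ ξ : EuclideanSpace ℝ (Fin d),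
            (∑' j : ℤ, ∫⁻ s in Set.Icc (1 : ℝ) 2,
                ENNReal.ofReal (Metric.infDist s (dilSet E j) ^ (-1 + 2 * β)) *
                  (‖m (((2 : ℝ) ^ (j + k) * s) • ξ)‖₊ : ℝ≥0∞) ^ 2) *
              (‖g ξ‖₊ : ℝ≥0∞) ^ 2) ≤
          ENNReal.ofReal C *
            (⨆ j : ℤ, ∫⁻ s in Set.Icc (1 : ℝ) 2,
              ENNReal.ofReal (Metric.infDist s (dilSet E j) ^ (-1 + 2 * β))) *
            (⨆ ξ : EuclideanSpace ℝ (Fin d), (‖g ξ‖₊ : ℝ≥0∞)) ^ 2 *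
            ∫⁻ ξ : EuclideanSpace ℝ (Fin d),
              (‖m ξ‖₊ : ℝ≥0∞) ^ 2 * (‖ξ‖₊ : ℝ≥0∞) ^ (-(d : ℝ)) := by
  refine ⟨6 * 4 ^ d, by positivity, fun E _ _ β _ _ g _ hg m hm => iSup_le fun k => ?_⟩
  have hC : ENNReal.ofReal (6 * 4 ^ d) = 6 * 4 ^ d := by
    rw [ENNReal.ofReal_mul (by norm_num), ENNReal.ofReal_pow (by norm_num)]
    norm_num
  have hw : ∀ j, Measurable fun s : ℝ =>
      ENNReal.ofReal (Metric.infDist s (dilSet E j) ^ (-1 + 2 * β)) := fun j =>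
    ENNReal.measurable_ofReal.comp ((Metric.continuous_infDist_pt _).measurable.pow_const _)
  have hgB : ∀ ξ, ‖g ξ‖ₑ ^ 2 ≤ (⨆ ξ, ‖g ξ‖ₑ) ^ 2 := fun ξ => by
    gcongr
    exact le_iSup (fun ξ => ‖g ξ‖ₑ) ξ
  have hgsupp : Function.support (fun ξ => ‖g ξ‖ₑ ^ 2) ⊆ annulus (1 / 4) 4 := fun ξ hξ =>
    hg ξ fun h => hξ (by simp [h])
  have key := lintegral_tsum_dyadic_average_mul_le volume hw
    (fun j => le_iSup (fun j => ∫⁻ s in Set.Icc (1 : ℝ) 2,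
      ENNReal.ofReal (Metric.infDist s (dilSet E j) ^ (-1 + 2 * β))) j)
    (F := fun ξ => ‖m ξ‖ₑ ^ 2) (by fun_prop) hgB hgsupp k
  simpa only [finrank_euclideanSpace_fin, hC, enorm_eq_nnnorm] using key

theorem stmt14 (d : ℕ) (hd : 1 ≤ d) :
    ∃ C : ℝ, 0 < C ∧
      ∀ E : Set ℝ, E ⊆ Set.Ioi 0 → (∀ j : ℤ, (2 : ℝ) ^ j ∈ E) →
      ∀ β : ℝ, 0 < β →
        (⨆ j : ℤ, ∫⁻ s in Set.Icc (1 : ℝ) 2,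
          ENNReal.ofReal (Metric.infDist s (dilSet E j) ^ (-1 + 2 * β))) < ⊤ →
      ∀ g : EuclideanSpace ℝ (Fin d) → ℂ, (∃ M : ℝ, ∀ ξ, ‖g ξ‖ ≤ M) →
        (∀ ξ, g ξ ≠ 0 → ‖ξ‖ ∈ Set.Icc (1 / 4 : ℝ) 4) →
      ∀ m : EuclideanSpace ℝ (Fin d) → ℂ, Measurable m →
        (⨆ k : ℤ, ∫⁻ ξ : EuclideanSpace ℝ (Fin d),
            (∑' j : ℤ, ∫⁻ s in Set.Icc (1 : ℝ) 2,
                ENNReal.ofReal (Metric.infDist s (dilSet E j) ^ (-1 + 2 * β)) *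
                  (‖m (((2 : ℝ) ^ (j + k) * s) • ξ)‖₊ : ℝ≥0∞) ^ 2) *
              (‖g ξ‖₊ : ℝ≥0∞) ^ 2) ≤
          ENNReal.ofReal C *
            (⨆ j : ℤ, ∫⁻ s in Set.Icc (1 : ℝ) 2,
              ENNReal.ofReal (Metric.infDist s (dilSet E j) ^ (-1 + 2 * β))) *
            (⨆ ξ : EuclideanSpace ℝ (Fin d), (‖g ξ‖₊ : ℝ≥0∞)) ^ 2 *
            ∫⁻ ξ : EuclideanSpace ℝ (Fin d),
              (‖m ξ‖₊ : ℝ≥0∞) ^ 2 * (‖ξ‖₊ : ℝ≥0∞) ^ (-(d : ℝ)) :=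
  stmt14_general d
end

section
/- Let d ≥ 1, σ ∈ (0,1), and let m : ℝ^d∖{0} → ℂ be continuous with B := ∑_{j ∈ ℤ} ‖ m(2^j ·) ψ̂ ‖_{C^{0,σ}}^2 < ∞. Then there is a constant C depending only on d, σ, φ such that: sup_{ξ ≠ 0} |m(ξ)| ≤ C B^{1/2}; m(ξ) → 0 as ξ → 0; and |m(ξ) − m(ξ')| ≤ C B^{1/2} (|ξ − ξ'|/|ξ|)^σ for all ξ, ξ' ∈ ℝ^d∖{0} with |ξ − ξ'| ≤ |ξ|/2. -/
open MeasureTheory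
open scoped ENNReal NNReal

/-- The Hölder "norm" `‖g‖_{C^{0,σ}} = sup |g| + sup_{x ≠ y} |g x - g y|/|x-y|^σ`,
valued in `ℝ≥0∞`. -/
noncomputable def holderNorm {d : ℕ} (σ : ℝ) (g : EuclideanSpace ℝ (Fin d) → ℂ) : ℝ≥0∞ :=
  (⨆ x, (‖g x‖₊ : ℝ≥0∞)) +
    ⨆ (x) (y) (_ : x ≠ y), (‖g x - g y‖₊ : ℝ≥0∞) / (‖x - y‖₊ : ℝ≥0∞) ^ σ

theorem stmt16 (d : ℕ) (hd : 1 ≤ d) (σ : ℝ) (hσ : σ ∈ Set.Ioo (0 : ℝ) 1)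
    (φhat : EuclideanSpace ℝ (Fin d) → ℂ) (hφsm : ContDiff ℝ (⊤ : ℕ∞) φhat)
    (hφ1 : ∀ ξ : EuclideanSpace ℝ (Fin d), ‖ξ‖ ≤ 1 → φhat ξ = 1)
    (hφ2 : ∀ ξ : EuclideanSpace ℝ (Fin d), 2 ≤ ‖ξ‖ → φhat ξ = 0) :
    ∃ C : ℝ, 0 < C ∧
      ∀ m : EuclideanSpace ℝ (Fin d) → ℂ,
        ContinuousOn m {(0 : EuclideanSpace ℝ (Fin d))}ᶜ →
        (∑' j : ℤ, (holderNorm σ fun ξ =>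
            m ((2 : ℝ) ^ j • ξ) * (φhat ξ - φhat ((2 : ℝ) • ξ))) ^ 2) < ⊤ →
        ((∀ ξ : EuclideanSpace ℝ (Fin d), ξ ≠ 0 →
            (‖m ξ‖₊ : ℝ≥0∞) ≤ ENNReal.ofReal C *
              (∑' j : ℤ, (holderNorm σ fun ξ =>
                m ((2 : ℝ) ^ j • ξ) * (φhat ξ - φhat ((2 : ℝ) • ξ))) ^ 2) ^ (1 / 2 : ℝ)) ∧
          Filter.Tendsto m (nhdsWithin 0 {(0 : EuclideanSpace ℝ (Fin d))}ᶜ) (nhds 0) ∧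
          ∀ ξ ξ' : EuclideanSpace ℝ (Fin d), ξ ≠ 0 → ξ' ≠ 0 →
            ‖ξ - ξ'‖ ≤ ‖ξ‖ / 2 →
            (‖m ξ - m ξ'‖₊ : ℝ≥0∞) ≤ ENNReal.ofReal C *
              (∑' j : ℤ, (holderNorm σ fun ξ =>
                m ((2 : ℝ) ^ j • ξ) * (φhat ξ - φhat ((2 : ℝ) • ξ))) ^ 2) ^ (1 / 2 : ℝ) *
              ENNReal.ofReal ((‖ξ - ξ'‖ / ‖ξ‖) ^ σ)) := by
  obtain ⟨hσ0, hσ1⟩ := hσ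
  refine ⟨16, by norm_num, ?_⟩
  intro m hm hB
  set B : ℝ≥0∞ := ∑' j : ℤ, (holderNorm σ fun ξ =>
      m ((2 : ℝ) ^ j • ξ) * (φhat ξ - φhat ((2 : ℝ) • ξ))) ^ 2 with hBdef
  set g : ℤ → EuclideanSpace ℝ (Fin d) → ℂ :=
    fun j ξ => m ((2 : ℝ) ^ j • ξ) * (φhat ξ - φhat ((2 : ℝ) • ξ)) with hg
  have hBg : B = ∑' j : ℤ, (holderNorm σ (g j)) ^ 2 := by rw [hBdef]
  have h2ne : (2:ℝ) ≠ 0 := two_ne_zero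
  have hz : ∀ c : ℤ, (0:ℝ) < (2:ℝ)^c := fun c => zpow_pos two_pos c
  have hns : ∀ (c : ℤ) (ζ : EuclideanSpace ℝ (Fin d)), ‖(2:ℝ)^c • ζ‖ = (2:ℝ)^c * ‖ζ‖ := by
    intro c ζ
    rw [norm_smul, Real.norm_eq_abs, abs_of_pos (hz c)]
  have hsm2 : ∀ (c : ℤ) (ζ : EuclideanSpace ℝ (Fin d)),
      (2:ℝ) • ((2:ℝ)^c • ζ) = (2:ℝ)^(c+1) • ζ := by
    intro c ζ
    rw [smul_smul, zpow_add_one₀ h2ne, mul_comm]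
  have hcancel : ∀ (j : ℤ) (ζ : EuclideanSpace ℝ (Fin d)),
      (2:ℝ)^j • ((2:ℝ)^(-j) • ζ) = ζ := by
    intro j ζ
    rw [smul_smul, ← zpow_add₀ h2ne, add_neg_cancel, zpow_zero, one_smul]
  -- telescoping decomposition
  have dec4 : ∀ (ζ : EuclideanSpace ℝ (Fin d)) (k : ℤ),
      (2:ℝ)^(k-1) ≤ ‖ζ‖ → ‖ζ‖ < (2:ℝ)^(k+2) →
      m ζ = g (k-1) ((2:ℝ)^(-(k-1)) • ζ) + g k ((2:ℝ)^(-k) • ζ)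
          + g (k+1) ((2:ℝ)^(-(k+1)) • ζ) + g (k+2) ((2:ℝ)^(-(k+2)) • ζ) := by
    intro ζ k h1 h2
    have e1 : φhat ((2:ℝ)^(-(k+2)) • ζ) = 1 := by
      apply hφ1
      rw [hns]
      have h3 : (2:ℝ)^(-(k+2)) * ‖ζ‖ ≤ (2:ℝ)^(-(k+2)) * (2:ℝ)^(k+2) :=
        mul_le_mul_of_nonneg_left h2.le (hz _).le
      have h4 : (2:ℝ)^(-(k+2)) * (2:ℝ)^(k+2) = 1 := by
        rw [← zpow_add₀ h2ne, show -(k+2)+(k+2) = 0 from by ring, zpow_zero]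
      linarith
    have e2 : φhat ((2:ℝ)^(-(k-1)+1) • ζ) = 0 := by
      apply hφ2
      rw [hns]
      have h3 : (2:ℝ)^(-(k-1)+1) * (2:ℝ)^(k-1) = 2 := by
        rw [← zpow_add₀ h2ne, show -(k-1)+1+(k-1) = 1 from by ring, zpow_one]
      have h4 : (2:ℝ)^(-(k-1)+1) * (2:ℝ)^(k-1) ≤ (2:ℝ)^(-(k-1)+1) * ‖ζ‖ :=
        mul_le_mul_of_nonneg_left h1 (hz _).le
      linarith
    simp only [hg]
    rw [hcancel, hcancel, hcancel, hcancel, hsm2, hsm2, hsm2, hsm2,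
      show (-(k-1):ℤ)+1 = -(k-1)+1 from rfl,
      show (-k:ℤ)+1 = -(k-1) from by ring,
      show (-(k+1):ℤ)+1 = -k from by ring,
      show (-(k+2):ℤ)+1 = -(k+1) from by ring,
      e1, e2]
    ring
  -- sup bound from holderNorm
  have hsup : ∀ (j : ℤ) x, (‖g j x‖₊ : ℝ≥0∞) ≤ holderNorm σ (g j) := by
    intro j x
    exact le_trans (le_iSup (fun x => (‖g j x‖₊ : ℝ≥0∞)) x) le_self_add
  -- Hölder bound from holderNorm
  have hhol : ∀ (j : ℤ) x y,
      (‖g j x - g j y‖₊ : ℝ≥0∞) ≤ holderNorm σ (g j) * (‖x - y‖₊ : ℝ≥0∞) ^ σ := by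
    intro j x y
    by_cases hxy : x = y
    · simp [hxy]
    · have hb0 : (‖x - y‖₊ : ℝ≥0∞) ^ σ ≠ 0 :=
        (ENNReal.rpow_pos (ENNReal.coe_pos.2 (nnnorm_pos.2 (sub_ne_zero.2 hxy)))
          ENNReal.coe_ne_top).ne'
      have hbt : (‖x - y‖₊ : ℝ≥0∞) ^ σ ≠ ⊤ :=
        ENNReal.rpow_ne_top_of_nonneg hσ0.le ENNReal.coe_ne_top
      have hd : (‖g j x - g j y‖₊ : ℝ≥0∞) / (‖x - y‖₊ : ℝ≥0∞) ^ σ ≤ holderNorm σ (g j) := by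
        refine le_trans ?_ le_add_self
        exact le_iSup_of_le x (le_iSup_of_le y (le_iSup_of_le hxy le_rfl))
      rwa [ENNReal.div_le_iff hb0 hbt] at hd
  have sqrt_le : ∀ x y : ℝ≥0∞, x^2 ≤ y^2 → x ≤ y := by
    intro x y h
    have h2 := ENNReal.rpow_le_rpow h (by norm_num : (0:ℝ) ≤ 1/2)
    rwa [← ENNReal.rpow_natCast x 2, ← ENNReal.rpow_natCast y 2, ← ENNReal.rpow_mul,
      ← ENNReal.rpow_mul, (by norm_num : ((2:ℕ):ℝ) * (1/2) = 1), ENNReal.rpow_one,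
      ENNReal.rpow_one] at h2
  have hle : ∀ j : ℤ, holderNorm σ (g j) ≤ B ^ (1/2:ℝ) := by
    intro j
    have h1 : holderNorm σ (g j) ^ 2 ≤ B := by
      rw [hBg]; exact ENNReal.le_tsum j
    have h2 := ENNReal.rpow_le_rpow h1 (by norm_num : (0:ℝ) ≤ 1/2)
    rwa [← ENNReal.rpow_natCast (holderNorm σ (g j)) 2, ← ENNReal.rpow_mul,
      (by norm_num : ((2:ℕ):ℝ) * (1/2) = 1), ENNReal.rpow_one] at h2
  -- logarithm bounds
  have hlog : ∀ ξ : EuclideanSpace ℝ (Fin d), ξ ≠ 0 →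
      (2:ℝ)^(Int.log 2 ‖ξ‖) ≤ ‖ξ‖ ∧ ‖ξ‖ < (2:ℝ)^(Int.log 2 ‖ξ‖ + 1) := by
    intro ξ hξ
    have hξn : 0 < ‖ξ‖ := norm_pos_iff.2 hξ
    constructor
    · have := Int.zpow_log_le_self (b := 2) (by norm_num) hξn
      push_cast at this; exact this
    · have := Int.lt_zpow_succ_log_self (b := 2) (by norm_num) ‖ξ‖
      push_cast at this; exact this
  have hmono : ∀ a b : ℤ, a ≤ b → (2:ℝ)^a ≤ (2:ℝ)^b := by
    intro a b hab
    exact zpow_le_zpow_right₀ one_le_two hab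
  -- four-term norm bound
  have fourbound : ∀ (A B' C' D : ℂ), (‖A + B' + C' + D‖₊ : ℝ≥0∞) ≤
      (‖A‖₊ : ℝ≥0∞) + ‖B'‖₊ + ‖C'‖₊ + ‖D‖₊ := by
    intro A B' C' D
    have : ‖A + B' + C' + D‖₊ ≤ ‖A‖₊ + ‖B'‖₊ + ‖C'‖₊ + ‖D‖₊ :=
      le_trans (nnnorm_add_le _ _) (add_le_add (le_trans (nnnorm_add_le _ _)
        (add_le_add (nnnorm_add_le _ _) le_rfl)) le_rfl)
    exact_mod_cast this
  have h16 : ENNReal.ofReal 16 = 16 := by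
    rw [ENNReal.ofReal_ofNat]
  -- Part 1
  have part1 : ∀ ξ : EuclideanSpace ℝ (Fin d), ξ ≠ 0 →
      (‖m ξ‖₊ : ℝ≥0∞) ≤ ENNReal.ofReal 16 * B ^ (1/2:ℝ) := by
    intro ξ hξ
    obtain ⟨hl1, hl2⟩ := hlog ξ hξ
    set k := Int.log 2 ‖ξ‖ with hk
    have h1 : (2:ℝ)^(k-1) ≤ ‖ξ‖ := le_trans (hmono _ _ (by omega)) hl1
    have h2 : ‖ξ‖ < (2:ℝ)^(k+2) := lt_of_lt_of_le hl2 (hmono _ _ (by omega))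
    rw [dec4 ξ k h1 h2]
    refine le_trans (fourbound _ _ _ _) ?_
    refine le_trans (add_le_add (add_le_add (add_le_add
      (le_trans (hsup _ _) (hle _)) (le_trans (hsup _ _) (hle _)))
      (le_trans (hsup _ _) (hle _))) (le_trans (hsup _ _) (hle _))) ?_
    rw [h16]
    calc B^(1/2:ℝ) + B^(1/2:ℝ) + B^(1/2:ℝ) + B^(1/2:ℝ) = 4 * B^(1/2:ℝ) := by ring
      _ ≤ 16 * B^(1/2:ℝ) := mul_le_mul_left (by norm_num) _
  -- Part 2
  have part2 : Filter.Tendsto m (nhdsWithin 0 {(0 : EuclideanSpace ℝ (Fin d))}ᶜ) (nhds 0) := by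
    rw [Metric.tendsto_nhdsWithin_nhds]
    intro ε hε
    have hfin : {j : ℤ | ENNReal.ofReal (ε/8) ^ 2 ≤ holderNorm σ (g j) ^ 2}.Finite := by
      apply ENNReal.finite_const_le_of_tsum_ne_top (hBg ▸ hB.ne)
      exact pow_ne_zero _ (ENNReal.ofReal_pos.2 (by linarith)).ne'
    obtain ⟨J, hJ⟩ := hfin.bddBelow
    have hsmall : ∀ j : ℤ, j < J → holderNorm σ (g j) ≤ ENNReal.ofReal (ε/8) := by
      intro j hj
      have hjS : j ∉ {j : ℤ | ENNReal.ofReal (ε/8) ^ 2 ≤ holderNorm σ (g j) ^ 2} := by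
        intro h
        have := hJ h
        omega
      exact sqrt_le _ _ (le_of_not_ge hjS)
    refine ⟨(2:ℝ)^(J-2), hz _, ?_⟩
    intro x hx hdist
    have hx0 : x ≠ 0 := hx
    rw [dist_zero_right] at hdist
    obtain ⟨hl1, hl2⟩ := hlog x hx0
    set k := Int.log 2 ‖x‖ with hk
    have hkJ : k < J - 2 := by
      by_contra hc
      push_neg at hc
      exact absurd (lt_of_le_of_lt (le_trans (hmono _ _ hc) hl1) hdist) (lt_irrefl _)
    have h1 : (2:ℝ)^(k-1) ≤ ‖x‖ := le_trans (hmono _ _ (by omega)) hl1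
    have h2 : ‖x‖ < (2:ℝ)^(k+2) := lt_of_lt_of_le hl2 (hmono _ _ (by omega))
    have hbound : (‖m x‖₊ : ℝ≥0∞) ≤ ENNReal.ofReal (ε/2) := by
      rw [dec4 x k h1 h2]
      refine le_trans (fourbound _ _ _ _) ?_
      refine le_trans (add_le_add (add_le_add (add_le_add
        (le_trans (hsup _ _) (hsmall _ (by omega))) (le_trans (hsup _ _) (hsmall _ (by omega))))
        (le_trans (hsup _ _) (hsmall _ (by omega))))
        (le_trans (hsup _ _) (hsmall _ (by omega)))) ?_
      rw [← ENNReal.ofReal_add (by linarith) (by linarith),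
        ← ENNReal.ofReal_add (by linarith) (by linarith),
        ← ENNReal.ofReal_add (by linarith) (by linarith)]
      exact ENNReal.ofReal_le_ofReal (by linarith)
    rw [dist_zero_right]
    rw [← ENNReal.ofReal_coe_nnreal, coe_nnnorm] at hbound
    have := (ENNReal.ofReal_le_ofReal_iff (by linarith)).1 hbound
    linarith
  -- Part 3
  have part3 : ∀ ξ ξ' : EuclideanSpace ℝ (Fin d), ξ ≠ 0 → ξ' ≠ 0 →
      ‖ξ - ξ'‖ ≤ ‖ξ‖ / 2 →
      (‖m ξ - m ξ'‖₊ : ℝ≥0∞) ≤ ENNReal.ofReal 16 * B ^ (1/2:ℝ) *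
        ENNReal.ofReal ((‖ξ - ξ'‖ / ‖ξ‖) ^ σ) := by
    intro ξ ξ' hξ hξ' hclose
    by_cases hEq : ξ = ξ'
    · simp [hEq]
    have hξn : 0 < ‖ξ‖ := norm_pos_iff.2 hξ
    obtain ⟨hl1, hl2⟩ := hlog ξ hξ
    set k := Int.log 2 ‖ξ‖ with hk
    have h1 : (2:ℝ)^(k-1) ≤ ‖ξ‖ := le_trans (hmono _ _ (by omega)) hl1
    have h2 : ‖ξ‖ < (2:ℝ)^(k+2) := lt_of_lt_of_le hl2 (hmono _ _ (by omega))
    have hup : ‖ξ'‖ ≤ ‖ξ‖ + ‖ξ - ξ'‖ := by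
      have h := norm_sub_norm_le ξ' ξ
      rw [norm_sub_rev ξ' ξ] at h
      linarith
    have hdown : ‖ξ‖ - ‖ξ - ξ'‖ ≤ ‖ξ'‖ := by
      have h := norm_sub_norm_le ξ ξ'
      linarith
    have hpow1 : (2:ℝ)^(k-1) = (2:ℝ)^k / 2 := by
      rw [zpow_sub_one₀ h2ne]; ring
    have hpow2 : (2:ℝ)^(k+1) = (2:ℝ)^k * 2 := by
      rw [zpow_add_one₀ h2ne]
    have hpow3 : (2:ℝ)^(k+2) = (2:ℝ)^k * 4 := by
      rw [show (k:ℤ)+2 = (k+1)+1 from by ring, zpow_add_one₀ h2ne, hpow2]; ring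
    have h1' : (2:ℝ)^(k-1) ≤ ‖ξ'‖ := by
      rw [hpow1]; linarith
    have h2' : ‖ξ'‖ < (2:ℝ)^(k+2) := by
      rw [hpow3]; rw [hpow2] at hl2; linarith
    rw [dec4 ξ k h1 h2, dec4 ξ' k h1' h2']
    have rearr : g (k-1) ((2:ℝ)^(-(k-1)) • ξ) + g k ((2:ℝ)^(-k) • ξ)
          + g (k+1) ((2:ℝ)^(-(k+1)) • ξ) + g (k+2) ((2:ℝ)^(-(k+2)) • ξ)
        - (g (k-1) ((2:ℝ)^(-(k-1)) • ξ') + g k ((2:ℝ)^(-k) • ξ')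
          + g (k+1) ((2:ℝ)^(-(k+1)) • ξ') + g (k+2) ((2:ℝ)^(-(k+2)) • ξ'))
        = (g (k-1) ((2:ℝ)^(-(k-1)) • ξ) - g (k-1) ((2:ℝ)^(-(k-1)) • ξ'))
          + (g k ((2:ℝ)^(-k) • ξ) - g k ((2:ℝ)^(-k) • ξ'))
          + (g (k+1) ((2:ℝ)^(-(k+1)) • ξ) - g (k+1) ((2:ℝ)^(-(k+1)) • ξ'))
          + (g (k+2) ((2:ℝ)^(-(k+2)) • ξ) - g (k+2) ((2:ℝ)^(-(k+2)) • ξ')) := by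
      ring
    rw [rearr]
    have term : ∀ j : ℤ, k - 1 ≤ j →
        (‖g j ((2:ℝ)^(-j) • ξ) - g j ((2:ℝ)^(-j) • ξ')‖₊ : ℝ≥0∞) ≤
          B^(1/2:ℝ) * ENNReal.ofReal ((4:ℝ)^σ * (‖ξ - ξ'‖ / ‖ξ‖)^σ) := by
      intro j hj
      have hstep := hhol j ((2:ℝ)^(-j) • ξ) ((2:ℝ)^(-j) • ξ')
      have hdiff : (2:ℝ)^(-j) • ξ - (2:ℝ)^(-j) • ξ' = (2:ℝ)^(-j) • (ξ - ξ') :=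
        (smul_sub _ _ _).symm
      rw [hdiff] at hstep
      have h2j : (2:ℝ)^(-j) ≤ 4 / ‖ξ‖ := by
        have hm1 : (2:ℝ)^(-j) ≤ (2:ℝ)^(-(k-1)) := hmono _ _ (by omega)
        have hm3 : (2:ℝ)^(-(k-1)) ≤ 4 / ‖ξ‖ := by
          rw [le_div_iff₀ hξn]
          have hlt := mul_lt_mul_of_pos_left hl2 (hz (-(k-1)))
          have he : (2:ℝ)^(-(k-1)) * (2:ℝ)^(k+1) = 4 := by
            rw [← zpow_add₀ h2ne, show -(k-1)+(k+1) = 2 from by ring]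
            norm_num
          linarith
        linarith
      have hnb : ‖(2:ℝ)^(-j) • (ξ - ξ')‖ ≤ 4 * (‖ξ - ξ'‖ / ‖ξ‖) := by
        rw [hns]
        calc (2:ℝ)^(-j) * ‖ξ - ξ'‖ ≤ (4 / ‖ξ‖) * ‖ξ - ξ'‖ :=
              mul_le_mul_of_nonneg_right h2j (norm_nonneg _)
          _ = 4 * (‖ξ - ξ'‖ / ‖ξ‖) := by ring
      have hrp : (‖(2:ℝ)^(-j) • (ξ - ξ')‖₊ : ℝ≥0∞)^σ ≤
          ENNReal.ofReal ((4 * (‖ξ - ξ'‖ / ‖ξ‖))^σ) := by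
        rw [← ENNReal.ofReal_coe_nnreal, coe_nnnorm, ENNReal.ofReal_rpow_of_nonneg (norm_nonneg _) hσ0.le]
        exact ENNReal.ofReal_le_ofReal (Real.rpow_le_rpow (norm_nonneg _) hnb hσ0.le)
      have hmul : (4 * (‖ξ - ξ'‖ / ‖ξ‖))^σ = (4:ℝ)^σ * (‖ξ - ξ'‖ / ‖ξ‖)^σ :=
        Real.mul_rpow (by norm_num) (div_nonneg (norm_nonneg _) (norm_nonneg _))
      refine le_trans hstep ?_
      rw [← hmul]
      exact mul_le_mul' (hle j) hrp
    refine le_trans (fourbound _ _ _ _) ?_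
    refine le_trans (add_le_add (add_le_add (add_le_add
      (term _ (by omega)) (term _ (by omega))) (term _ (by omega))) (term _ (by omega))) ?_
    have h4σ : (4:ℝ)^σ ≤ 4 := by
      calc (4:ℝ)^σ ≤ (4:ℝ)^(1:ℝ) :=
            Real.rpow_le_rpow_of_exponent_le (by norm_num) hσ1.le
        _ = 4 := Real.rpow_one 4
    have hofle : ENNReal.ofReal ((4:ℝ)^σ * (‖ξ - ξ'‖ / ‖ξ‖)^σ) ≤
        ENNReal.ofReal 4 * ENNReal.ofReal ((‖ξ - ξ'‖ / ‖ξ‖)^σ) := by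
      rw [← ENNReal.ofReal_mul (by norm_num)]
      refine ENNReal.ofReal_le_ofReal ?_
      have : (0:ℝ) ≤ (‖ξ - ξ'‖ / ‖ξ‖)^σ :=
        Real.rpow_nonneg (div_nonneg (norm_nonneg _) (norm_nonneg _)) σ
      nlinarith
    calc B^(1/2:ℝ) * ENNReal.ofReal ((4:ℝ)^σ * (‖ξ - ξ'‖ / ‖ξ‖)^σ)
          + B^(1/2:ℝ) * ENNReal.ofReal ((4:ℝ)^σ * (‖ξ - ξ'‖ / ‖ξ‖)^σ)
          + B^(1/2:ℝ) * ENNReal.ofReal ((4:ℝ)^σ * (‖ξ - ξ'‖ / ‖ξ‖)^σ)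
          + B^(1/2:ℝ) * ENNReal.ofReal ((4:ℝ)^σ * (‖ξ - ξ'‖ / ‖ξ‖)^σ)
        = 4 * (B^(1/2:ℝ) * ENNReal.ofReal ((4:ℝ)^σ * (‖ξ - ξ'‖ / ‖ξ‖)^σ)) := by ring
      _ ≤ 4 * (B^(1/2:ℝ) * (ENNReal.ofReal 4 * ENNReal.ofReal ((‖ξ - ξ'‖ / ‖ξ‖)^σ))) :=
          mul_le_mul_right (mul_le_mul_right hofle _) _
      _ = (4 * ENNReal.ofReal 4) * B^(1/2:ℝ) * ENNReal.ofReal ((‖ξ - ξ'‖ / ‖ξ‖)^σ) := by ring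
      _ = ENNReal.ofReal 16 * B^(1/2:ℝ) * ENNReal.ofReal ((‖ξ - ξ'‖ / ‖ξ‖)^σ) := by
          rw [h16, ENNReal.ofReal_ofNat]
          norm_num
  exact ⟨part1, part2, part3⟩
end

section
/- Let d ≥ 1 and s ∈ (0,1). Then there is a constant C depending only on d, s, φ such that for every continuous m : ℝ^d∖{0} → ℂ, sup_{r > 0} ∑_{j ∈ ℤ} ‖ m(r 2^j ·) ψ̂ ‖_{C^{0,s}}^2 ≤ C ∑_{j ∈ ℤ} ‖ m(2^j ·) ψ̂ ‖_{C^{0,s}}^2. -/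
set_option maxHeartbeats 1000000


open MeasureTheory
open scoped ENNReal NNReal

namespace Stmt18Aux

variable {d : ℕ}

noncomputable def supPart (g : EuclideanSpace ℝ (Fin d) → ℂ) : ℝ≥0∞ := ⨆ x, (‖g x‖₊ : ℝ≥0∞)

noncomputable def holPart (σ : ℝ) (g : EuclideanSpace ℝ (Fin d) → ℂ) : ℝ≥0∞ :=
  ⨆ (x) (y) (_ : x ≠ y), (‖g x - g y‖₊ : ℝ≥0∞) / (‖x - y‖₊ : ℝ≥0∞) ^ σ

lemma holderNorm_def (σ : ℝ) (g : EuclideanSpace ℝ (Fin d) → ℂ) :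
    holderNorm σ g = supPart g + holPart σ g := rfl

lemma supPart_le {g : EuclideanSpace ℝ (Fin d) → ℂ} {C : ℝ≥0∞}
    (h : ∀ x, (‖g x‖₊ : ℝ≥0∞) ≤ C) : supPart g ≤ C := by exact iSup_le h

lemma le_supPart (g : EuclideanSpace ℝ (Fin d) → ℂ) (x) :
    (‖g x‖₊ : ℝ≥0∞) ≤ supPart g := le_iSup (fun x => (‖g x‖₊ : ℝ≥0∞)) x

lemma holPart_le {σ : ℝ} {g : EuclideanSpace ℝ (Fin d) → ℂ} {C : ℝ≥0∞}
    (h : ∀ x y, x ≠ y → (‖g x - g y‖₊ : ℝ≥0∞) / (‖x - y‖₊ : ℝ≥0∞) ^ σ ≤ C) :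
    holPart σ g ≤ C := by
  refine iSup_le fun x => iSup_le fun y => iSup_le fun hxy => h x y hxy

lemma le_holPart {σ : ℝ} (g : EuclideanSpace ℝ (Fin d) → ℂ) {x y} (hxy : x ≠ y) :
    (‖g x - g y‖₊ : ℝ≥0∞) / (‖x - y‖₊ : ℝ≥0∞) ^ σ ≤ holPart σ g :=
  le_iSup_of_le (f := fun x => ⨆ (y) (_ : x ≠ y), (‖g x - g y‖₊ : ℝ≥0∞) / (‖x - y‖₊ : ℝ≥0∞) ^ σ) x
    (le_iSup_of_le y (le_iSup_of_le hxy le_rfl))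

lemma holderNorm_add (σ : ℝ) (f g : EuclideanSpace ℝ (Fin d) → ℂ) :
    holderNorm σ (fun x => f x + g x) ≤ holderNorm σ f + holderNorm σ g := by
  rw [holderNorm_def, holderNorm_def, holderNorm_def]
  have h1 : supPart (fun x => f x + g x) ≤ supPart f + supPart g := by
    refine supPart_le fun x => ?_
    calc (‖f x + g x‖₊ : ℝ≥0∞) ≤ (‖f x‖₊ : ℝ≥0∞) + ‖g x‖₊ := by
          exact_mod_cast nnnorm_add_le _ _
      _ ≤ _ := add_le_add (le_supPart f x) (le_supPart g x)
  have h2 : holPart σ (fun x => f x + g x) ≤ holPart σ f + holPart σ g := by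
    refine holPart_le fun x y hxy => ?_
    have key : (‖(f x + g x) - (f y + g y)‖₊ : ℝ≥0∞) ≤ (‖f x - f y‖₊ : ℝ≥0∞) + ‖g x - g y‖₊ := by
      have e : f x + g x - (f y + g y) = (f x - f y) + (g x - g y) := by ring
      rw [e]; exact_mod_cast nnnorm_add_le _ _
    calc (‖(f x + g x) - (f y + g y)‖₊ : ℝ≥0∞) / (‖x - y‖₊ : ℝ≥0∞) ^ σ
        ≤ ((‖f x - f y‖₊ : ℝ≥0∞) + ‖g x - g y‖₊) / (‖x - y‖₊ : ℝ≥0∞) ^ σ :=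
          ENNReal.div_le_div_right key _
      _ = (‖f x - f y‖₊ : ℝ≥0∞) / (‖x - y‖₊ : ℝ≥0∞) ^ σ
            + (‖g x - g y‖₊ : ℝ≥0∞) / (‖x - y‖₊ : ℝ≥0∞) ^ σ := ENNReal.add_div
      _ ≤ _ := add_le_add (le_holPart f hxy) (le_holPart g hxy)
  calc supPart (fun x => f x + g x) + holPart σ (fun x => f x + g x)
      ≤ (supPart f + supPart g) + (holPart σ f + holPart σ g) := add_le_add h1 h2
    _ = (supPart f + holPart σ f) + (supPart g + holPart σ g) := by ring

lemma holderNorm_mul (σ : ℝ) (f g : EuclideanSpace ℝ (Fin d) → ℂ) :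
    holderNorm σ (fun x => f x * g x) ≤ holderNorm σ f * holderNorm σ g := by
  have h1 : supPart (fun x => f x * g x) ≤ supPart f * supPart g := by
    refine supPart_le fun x => ?_
    calc (‖f x * g x‖₊ : ℝ≥0∞) = (‖f x‖₊ : ℝ≥0∞) * ‖g x‖₊ := by
          rw [nnnorm_mul]; push_cast; ring
      _ ≤ _ := mul_le_mul' (le_supPart f x) (le_supPart g x)
  have h2 : holPart σ (fun x => f x * g x) ≤ supPart f * holPart σ g + supPart g * holPart σ f := by
    refine holPart_le fun x y hxy => ?_
    have key : (‖f x * g x - f y * g y‖₊ : ℝ≥0∞)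
        ≤ (‖f x‖₊ : ℝ≥0∞) * ‖g x - g y‖₊ + (‖g y‖₊ : ℝ≥0∞) * ‖f x - f y‖₊ := by
      have e : f x * g x - f y * g y = f x * (g x - g y) + (f x - f y) * g y := by ring
      calc (‖f x * g x - f y * g y‖₊ : ℝ≥0∞)
          = (‖f x * (g x - g y) + (f x - f y) * g y‖₊ : ℝ≥0∞) := by rw [e]
        _ ≤ (‖f x * (g x - g y)‖₊ : ℝ≥0∞) + ‖(f x - f y) * g y‖₊ := by
            exact_mod_cast nnnorm_add_le _ _
        _ = (‖f x‖₊ : ℝ≥0∞) * ‖g x - g y‖₊ + (‖g y‖₊ : ℝ≥0∞) * ‖f x - f y‖₊ := by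
            rw [nnnorm_mul, nnnorm_mul]; push_cast; ring
    calc (‖f x * g x - f y * g y‖₊ : ℝ≥0∞) / (‖x - y‖₊ : ℝ≥0∞) ^ σ
        ≤ ((‖f x‖₊ : ℝ≥0∞) * ‖g x - g y‖₊ + (‖g y‖₊ : ℝ≥0∞) * ‖f x - f y‖₊)
            / (‖x - y‖₊ : ℝ≥0∞) ^ σ := ENNReal.div_le_div_right key _
      _ = (‖f x‖₊ : ℝ≥0∞) * ((‖g x - g y‖₊ : ℝ≥0∞) / (‖x - y‖₊ : ℝ≥0∞) ^ σ)
            + (‖g y‖₊ : ℝ≥0∞) * ((‖f x - f y‖₊ : ℝ≥0∞) / (‖x - y‖₊ : ℝ≥0∞) ^ σ) := by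
            rw [ENNReal.add_div, mul_div_assoc, mul_div_assoc]
      _ ≤ supPart f * holPart σ g + supPart g * holPart σ f :=
          add_le_add (mul_le_mul' (le_supPart f x) (le_holPart g hxy))
            (mul_le_mul' (le_supPart g y) (le_holPart f hxy))
  rw [holderNorm_def, holderNorm_def, holderNorm_def]
  calc supPart (fun x => f x * g x) + holPart σ (fun x => f x * g x)
      ≤ supPart f * supPart g + (supPart f * holPart σ g + supPart g * holPart σ f) :=
        add_le_add h1 h2
    _ ≤ (supPart f + holPart σ f) * (supPart g + holPart σ g) := by
        have e : (supPart f + holPart σ f) * (supPart g + holPart σ g)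
            = (supPart f * supPart g + (supPart f * holPart σ g + supPart g * holPart σ f))
              + holPart σ f * holPart σ g := by ring
        rw [e]; exact le_self_add

lemma holderNorm_comp_smul {σ : ℝ} (hσ : 0 ≤ σ) (g : EuclideanSpace ℝ (Fin d) → ℂ)
    {c : ℝ} (hc : 0 < c) :
    holderNorm σ (fun x => g (c • x)) ≤ ENNReal.ofReal (max 1 (c ^ σ)) * holderNorm σ g := by
  set M := ENNReal.ofReal (max 1 (c ^ σ)) with hMdef
  have hM1 : (1 : ℝ≥0∞) ≤ M := by
    rw [hMdef, ← ENNReal.ofReal_one]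
    exact ENNReal.ofReal_le_ofReal (le_max_left _ _)
  have hMe : ENNReal.ofReal (c ^ σ) ≤ M :=
    ENNReal.ofReal_le_ofReal (le_max_right _ _)
  set e := ENNReal.ofReal (c ^ σ) with hedef
  have he0 : e ≠ 0 := by
    rw [hedef]
    simp [ENNReal.ofReal_eq_zero, not_le, Real.rpow_pos_of_pos hc σ]
  have heT : e ≠ ⊤ := ENNReal.ofReal_ne_top
  have hS : supPart (fun x => g (c • x)) ≤ supPart g :=
    supPart_le fun x => le_supPart g (c • x)
  have hH : holPart σ (fun x => g (c • x)) ≤ M * holPart σ g := by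
    refine holPart_le fun x y hxy => ?_
    have huv : c • x ≠ c • y := fun h => hxy (smul_right_injective _ (ne_of_gt hc) h)
    have hden : ((‖c • x - c • y‖₊ : ℝ≥0∞)) ^ σ = e * ((‖x - y‖₊ : ℝ≥0∞)) ^ σ := by
      rw [← smul_sub, nnnorm_smul]
      push_cast
      rw [ENNReal.mul_rpow_of_nonneg _ _ hσ]
      congr 1
      rw [Real.nnnorm_of_nonneg hc.le, hedef,
        ← ENNReal.ofReal_rpow_of_pos hc, ENNReal.ofReal_eq_coe_nnreal hc.le]
    have step : (‖g (c • x) - g (c • y)‖₊ : ℝ≥0∞) / (‖x - y‖₊ : ℝ≥0∞) ^ σ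
        = e * ((‖g (c • x) - g (c • y)‖₊ : ℝ≥0∞) / (‖c • x - c • y‖₊ : ℝ≥0∞) ^ σ) := by
      rw [hden, ← mul_div_assoc, ← ENNReal.mul_div_mul_left _ _ he0 heT]
    rw [step]
    exact mul_le_mul' hMe (le_holPart g huv)
  rw [holderNorm_def, holderNorm_def, mul_add]
  exact add_le_add (hS.trans (le_mul_of_one_le_left zero_le hM1)) hH

lemma holderNorm_le_of_bound_lip {σ : ℝ} (hσ0 : 0 < σ) (hσ1 : σ ≤ 1)
    {g : EuclideanSpace ℝ (Fin d) → ℂ} {M : ℝ} {L : ℝ≥0}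
    (hM : ∀ x, ‖g x‖ ≤ M) (hL : LipschitzWith L g) :
    holderNorm σ g ≤ ENNReal.ofReal M + (ENNReal.ofReal (2 * M) + L) := by
  rw [holderNorm_def]
  refine add_le_add (supPart_le fun x => ?_) (holPart_le fun x y hxy => ?_)
  · rw [← enorm_eq_nnnorm, ← ofReal_norm]
    exact ENNReal.ofReal_le_ofReal (hM x)
  · rcases le_total 1 ‖x - y‖ with h1 | h1
    · refine le_trans ?_ (le_self_add : ENNReal.ofReal (2*M) ≤ ENNReal.ofReal (2*M) + (L:ℝ≥0∞))
      refine ENNReal.div_le_of_le_mul ?_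
      have hnum : (‖g x - g y‖₊ : ℝ≥0∞) ≤ ENNReal.ofReal (2 * M) := by
        rw [← enorm_eq_nnnorm, ← ofReal_norm]
        refine ENNReal.ofReal_le_ofReal ?_
        calc ‖g x - g y‖ ≤ ‖g x‖ + ‖g y‖ := norm_sub_le _ _
          _ ≤ 2 * M := by have := hM x; have := hM y; linarith
      have hden : (1 : ℝ≥0∞) ≤ (‖x - y‖₊ : ℝ≥0∞) ^ σ := by
        refine ENNReal.one_le_rpow ?_ hσ0
        rw [← enorm_eq_nnnorm, ← ofReal_norm, ← ENNReal.ofReal_one]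
        exact ENNReal.ofReal_le_ofReal h1
      calc (‖g x - g y‖₊ : ℝ≥0∞) ≤ ENNReal.ofReal (2 * M) := hnum
        _ = ENNReal.ofReal (2 * M) * 1 := (mul_one _).symm
        _ ≤ ENNReal.ofReal (2 * M) * (‖x - y‖₊ : ℝ≥0∞) ^ σ := by gcongr
    · refine le_trans ?_ (le_add_self : (L:ℝ≥0∞) ≤ ENNReal.ofReal (2*M) + (L:ℝ≥0∞))
      refine ENNReal.div_le_of_le_mul ?_
      have hlip : (‖g x - g y‖₊ : ℝ≥0∞) ≤ (L : ℝ≥0∞) * (‖x - y‖₊ : ℝ≥0∞) := by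
        have := hL x y
        rwa [edist_eq_enorm_sub, edist_eq_enorm_sub, enorm_eq_nnnorm, enorm_eq_nnnorm] at this
      have hpow : ((‖x - y‖₊ : ℝ≥0∞)) ≤ ((‖x - y‖₊ : ℝ≥0∞)) ^ σ := by
        have hb1 : ((‖x - y‖₊ : ℝ≥0∞)) ≤ 1 := by
          rw [← enorm_eq_nnnorm, ← ofReal_norm, ← ENNReal.ofReal_one]
          exact ENNReal.ofReal_le_ofReal h1
        calc ((‖x - y‖₊ : ℝ≥0∞)) = ((‖x - y‖₊ : ℝ≥0∞)) ^ (1:ℝ) := (ENNReal.rpow_one _).symm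
          _ ≤ _ := ENNReal.rpow_le_rpow_of_exponent_ge hb1 hσ1
      exact hlip.trans (mul_le_mul' le_rfl hpow)

lemma sq_add_le (x y : ℝ≥0∞) : (x + y) ^ 2 ≤ 4 * (x ^ 2 + y ^ 2) := by
  have h1 : x + y ≤ 2 * (x ⊔ y) := by
    rw [two_mul]; exact add_le_add le_sup_left le_sup_right
  calc (x + y) ^ 2 ≤ (2 * (x ⊔ y)) ^ 2 := pow_le_pow_left' h1 2
    _ = 4 * (x ⊔ y) ^ 2 := by ring
    _ ≤ 4 * (x ^ 2 + y ^ 2) := by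
      gcongr
      rcases le_total x y with h | h
      · rw [sup_eq_right.2 h]; exact le_add_self
      · rw [sup_eq_left.2 h]; exact le_self_add

lemma sq_add5_le (a b c d e : ℝ≥0∞) :
    (a + b + c + d + e) ^ 2 ≤ 256 * (a ^ 2 + b ^ 2 + c ^ 2 + d ^ 2 + e ^ 2) := by
  calc (a + b + c + d + e) ^ 2 ≤ 4 * ((a + b + c + d) ^ 2 + e ^ 2) := sq_add_le _ _
    _ ≤ 4 * ((4 * ((a + b + c) ^ 2 + d ^ 2)) + e ^ 2) := by gcongr; exact sq_add_le _ _
    _ ≤ 4 * ((4 * ((4 * ((a + b) ^ 2 + c ^ 2)) + d ^ 2)) + e ^ 2) := by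
        gcongr; exact sq_add_le _ _
    _ ≤ 4 * ((4 * ((4 * ((4 * (a ^ 2 + b ^ 2)) + c ^ 2)) + d ^ 2)) + e ^ 2) := by
        gcongr; exact sq_add_le _ _
    _ = 256 * (a ^ 2 + b ^ 2) + 64 * c ^ 2 + 16 * d ^ 2 + 4 * e ^ 2 := by ring
    _ ≤ 256 * (a ^ 2 + b ^ 2) + 256 * c ^ 2 + 256 * d ^ 2 + 256 * e ^ 2 := by
        gcongr <;> norm_num
    _ = 256 * (a ^ 2 + b ^ 2 + c ^ 2 + d ^ 2 + e ^ 2) := by ring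

lemma tsum_shift (f : ℤ → ℝ≥0∞) (n : ℤ) : ∑' j : ℤ, f (j + n) = ∑' j : ℤ, f j :=
  (Equiv.addRight n).tsum_eq f

end Stmt18Aux

theorem stmt18 (d : ℕ) (hd : 1 ≤ d) (s : ℝ) (hs : s ∈ Set.Ioo (0 : ℝ) 1)
    (φhat : EuclideanSpace ℝ (Fin d) → ℂ) (hφsm : ContDiff ℝ (⊤ : ℕ∞) φhat)
    (hφ1 : ∀ ξ : EuclideanSpace ℝ (Fin d), ‖ξ‖ ≤ 1 → φhat ξ = 1)
    (hφ2 : ∀ ξ : EuclideanSpace ℝ (Fin d), 2 ≤ ‖ξ‖ → φhat ξ = 0) :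
    ∃ C : ℝ, 0 < C ∧
      ∀ m : EuclideanSpace ℝ (Fin d) → ℂ,
        ContinuousOn m {(0 : EuclideanSpace ℝ (Fin d))}ᶜ →
        (⨆ (r : ℝ) (_ : 0 < r),
            ∑' j : ℤ, (holderNorm s fun ξ =>
              m ((r * (2 : ℝ) ^ j) • ξ) * (φhat ξ - φhat ((2 : ℝ) • ξ))) ^ 2) ≤
          ENNReal.ofReal C *
            ∑' j : ℤ, (holderNorm s fun ξ =>
              m ((2 : ℝ) ^ j • ξ) * (φhat ξ - φhat ((2 : ℝ) • ξ))) ^ 2 := by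
  obtain ⟨hs0, hs1⟩ := hs
  have hnorm2 : ∀ (c : ℝ) (ξ : EuclideanSpace ℝ (Fin d)), ‖c • ξ‖ = |c| * ‖ξ‖ := by
    intro c ξ; rw [norm_smul, Real.norm_eq_abs]
  have hψsm : ContDiff ℝ (⊤ : ℕ∞) (fun ξ : EuclideanSpace ℝ (Fin d) => φhat ξ - φhat ((2:ℝ) • ξ)) :=
    hφsm.sub (hφsm.comp (contDiff_id.const_smul (2:ℝ)))
  have hψsupp : HasCompactSupport
      (fun ξ : EuclideanSpace ℝ (Fin d) => φhat ξ - φhat ((2:ℝ) • ξ)) := by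
    refine HasCompactSupport.intro (isCompact_closedBall (0 : EuclideanSpace ℝ (Fin d)) 2) ?_
    intro ξ hξ
    simp only [Metric.mem_closedBall, dist_zero_right, not_le] at hξ
    have h2 : (2:ℝ) ≤ ‖(2:ℝ) • ξ‖ := by
      rw [hnorm2, abs_of_nonneg (by norm_num : (0:ℝ) ≤ 2)]; nlinarith
    show φhat ξ - φhat ((2:ℝ) • ξ) = 0
    rw [hφ2 ξ hξ.le, hφ2 _ h2, sub_self]
  obtain ⟨M, hM⟩ := hψsupp.exists_bound_of_continuous hψsm.continuous
  obtain ⟨L, hL⟩ := ContDiff.lipschitzWith_of_hasCompactSupport hψsupp hψsm (by simp)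
  have hM0 : 0 ≤ M := (norm_nonneg _).trans (hM 0)
  set Hψ := holderNorm s (fun ξ : EuclideanSpace ℝ (Fin d) => φhat ξ - φhat ((2:ℝ) • ξ))
    with hHψdef
  have hHψle : Hψ ≤ ENNReal.ofReal M + (ENNReal.ofReal (2*M) + L) :=
    Stmt18Aux.holderNorm_le_of_bound_lip hs0 hs1.le hM hL
  set P : ℝ := M + (2*M + L) with hPdef
  have hP0 : (0:ℝ) ≤ P := by positivity
  have hHψP : Hψ ≤ ENNReal.ofReal P := by
    refine hHψle.trans ?_
    rw [hPdef, ENNReal.ofReal_add hM0 (by positivity),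
      ENNReal.ofReal_add (by positivity : (0:ℝ) ≤ 2*M) L.coe_nonneg,
      ENNReal.ofReal_coe_nnreal]
  refine ⟨81920 * (P+1)^2, by positivity, ?_⟩
  intro m _hm
  -- annulus support
  have hann : ∀ ξ : EuclideanSpace ℝ (Fin d), (φhat ξ - φhat ((2:ℝ) • ξ)) ≠ 0 →
      1/2 ≤ ‖ξ‖ ∧ ‖ξ‖ ≤ 2 := by
    intro ξ h
    constructor
    · by_contra hc; push_neg at hc
      refine h ?_
      rw [hφ1 ξ (by linarith), hφ1 ((2:ℝ) • ξ)
        (by rw [hnorm2, abs_of_nonneg (by norm_num : (0:ℝ) ≤ 2)]; linarith), sub_self]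
    · by_contra hc; push_neg at hc
      refine h ?_
      rw [hφ2 ξ hc.le, hφ2 ((2:ℝ) • ξ)
        (by rw [hnorm2, abs_of_nonneg (by norm_num : (0:ℝ) ≤ 2)]; nlinarith), sub_self]
  -- pointwise key identity
  have key : ∀ (r : ℝ), 1 ≤ r → r ≤ 2 → ∀ (j : ℤ) (ξ : EuclideanSpace ℝ (Fin d)),
      m ((r * (2:ℝ)^j) • ξ) * (φhat ξ - φhat ((2:ℝ) • ξ)) =
        m ((2:ℝ)^(j+2) • ((r/4) • ξ)) * (φhat ((r/4) • ξ) - φhat ((2:ℝ) • ((r/4) • ξ)))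
            * (φhat ξ - φhat ((2:ℝ) • ξ))
        + m ((2:ℝ)^(j+1) • ((r/2) • ξ)) * (φhat ((r/2) • ξ) - φhat ((2:ℝ) • ((r/2) • ξ)))
            * (φhat ξ - φhat ((2:ℝ) • ξ))
        + m ((2:ℝ)^j • (r • ξ)) * (φhat (r • ξ) - φhat ((2:ℝ) • (r • ξ)))
            * (φhat ξ - φhat ((2:ℝ) • ξ))
        + m ((2:ℝ)^(j-1) • ((2*r) • ξ)) * (φhat ((2*r) • ξ) - φhat ((2:ℝ) • ((2*r) • ξ)))
            * (φhat ξ - φhat ((2:ℝ) • ξ))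
        + m ((2:ℝ)^(j-2) • ((4*r) • ξ)) * (φhat ((4*r) • ξ) - φhat ((2:ℝ) • ((4*r) • ξ)))
            * (φhat ξ - φhat ((2:ℝ) • ξ)) := by
    intro r hr1 hr2 j ξ
    have h4 : ((2:ℝ)^(2:ℤ)) = 4 := by norm_num
    have h2 : ((2:ℝ)^(1:ℤ)) = 2 := by norm_num
    have e1 : (2:ℝ)^(j+2) * (r/4) = r * 2^j := by
      rw [zpow_add₀ (two_ne_zero : (2:ℝ) ≠ 0), h4]; ring
    have e2 : (2:ℝ)^(j+1) * (r/2) = r * 2^j := by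
      rw [zpow_add₀ (two_ne_zero : (2:ℝ) ≠ 0), h2]; ring
    have e3 : (2:ℝ)^j * r = r * 2^j := by ring
    have e4 : (2:ℝ)^(j-1) * (2*r) = r * 2^j := by
      rw [zpow_sub₀ (two_ne_zero : (2:ℝ) ≠ 0), h2]; field_simp
    have e5 : (2:ℝ)^(j-2) * (4*r) = r * 2^j := by
      rw [zpow_sub₀ (two_ne_zero : (2:ℝ) ≠ 0), h4]; field_simp
    simp only [smul_smul]
    rw [e1, e2, e3, e4, e5,
      show (2:ℝ)*(r/4) = r/2 by ring, show (2:ℝ)*(r/2) = r by ring,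
      show (2:ℝ)*(2*r) = 4*r by ring, show (2:ℝ)*(4*r) = 8*r by ring]
    by_cases hψ : φhat ξ - φhat ((2:ℝ) • ξ) = 0
    · rw [hψ]; ring
    · obtain ⟨hlo, hhi⟩ := hann ξ hψ
      have hA : φhat ((r/4) • ξ) = 1 := by
        refine hφ1 _ ?_
        rw [hnorm2, abs_of_nonneg (by linarith : (0:ℝ) ≤ r/4)]; nlinarith
      have hB : φhat ((8*r) • ξ) = 0 := by
        refine hφ2 _ ?_
        rw [hnorm2, abs_of_nonneg (by linarith : (0:ℝ) ≤ 8*r)]; nlinarith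
      rw [hA, hB]; ring
  -- the RHS sequence
  set a : ℤ → ℝ≥0∞ := fun i =>
    holderNorm s (fun ζ => m ((2:ℝ)^i • ζ) * (φhat ζ - φhat ((2:ℝ) • ζ))) with hadef
  -- constant factor lemma
  have hfac : ∀ c : ℝ, 0 < c → c ≤ 8 → ENNReal.ofReal (max 1 (c ^ s)) ≤ 8 := by
    intro c hc hc8
    have hmax : max 1 (c^s) ≤ 8 := by
      rcases le_total c 1 with h | h
      · have h1 := Real.rpow_le_one hc.le h hs0.le
        rw [max_le_iff]; exact ⟨by norm_num, by linarith⟩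
      · have h1 : c^s ≤ c^(1:ℝ) := Real.rpow_le_rpow_of_exponent_le h hs1.le
        rw [Real.rpow_one] at h1
        rw [max_le_iff]; exact ⟨by norm_num, by linarith⟩
    calc ENNReal.ofReal (max 1 (c^s)) ≤ ENNReal.ofReal 8 := ENNReal.ofReal_le_ofReal hmax
      _ = 8 := by norm_num
  -- per-term bound
  have hterm : ∀ (i : ℤ) (c : ℝ), 0 < c → c ≤ 8 →
      holderNorm s (fun ξ => m ((2:ℝ)^i • (c • ξ))
          * (φhat (c • ξ) - φhat ((2:ℝ) • (c • ξ))) * (φhat ξ - φhat ((2:ℝ) • ξ)))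
        ≤ 8 * Hψ * a i := by
    intro i c hc hc8
    have hmul := Stmt18Aux.holderNorm_mul s
      (fun ξ => m ((2:ℝ)^i • (c • ξ)) * (φhat (c • ξ) - φhat ((2:ℝ) • (c • ξ))))
      (fun ξ => φhat ξ - φhat ((2:ℝ) • ξ))
    have hcomp := Stmt18Aux.holderNorm_comp_smul hs0.le
      (fun ζ => m ((2:ℝ)^i • ζ) * (φhat ζ - φhat ((2:ℝ) • ζ))) hc
    have hcomp' : holderNorm s (fun ξ => m ((2:ℝ)^i • (c • ξ))
        * (φhat (c • ξ) - φhat ((2:ℝ) • (c • ξ)))) ≤ 8 * a i := by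
      refine le_trans hcomp ?_
      exact mul_le_mul' (hfac c hc hc8) le_rfl
    calc holderNorm s (fun ξ => m ((2:ℝ)^i • (c • ξ))
          * (φhat (c • ξ) - φhat ((2:ℝ) • (c • ξ))) * (φhat ξ - φhat ((2:ℝ) • ξ)))
        ≤ holderNorm s (fun ξ => m ((2:ℝ)^i • (c • ξ))
            * (φhat (c • ξ) - φhat ((2:ℝ) • (c • ξ)))) * Hψ := hmul
      _ ≤ (8 * a i) * Hψ := mul_le_mul' hcomp' le_rfl
      _ = 8 * Hψ * a i := by ring
  -- per-j bound for r ∈ [1,2]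
  have hbound : ∀ (r : ℝ), 1 ≤ r → r ≤ 2 → ∀ j : ℤ,
      holderNorm s (fun ξ => m ((r * (2:ℝ)^j) • ξ) * (φhat ξ - φhat ((2:ℝ) • ξ)))
        ≤ 8 * Hψ * (a (j+2) + a (j+1) + a j + a (j-1) + a (j-2)) := by
    intro r hr1 hr2 j
    have hfe : (fun ξ => m ((r * (2:ℝ)^j) • ξ) * (φhat ξ - φhat ((2:ℝ) • ξ)))
        = (fun ξ =>
            (m ((2:ℝ)^(j+2) • ((r/4) • ξ)) * (φhat ((r/4) • ξ) - φhat ((2:ℝ) • ((r/4) • ξ)))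
              * (φhat ξ - φhat ((2:ℝ) • ξ))
            + m ((2:ℝ)^(j+1) • ((r/2) • ξ)) * (φhat ((r/2) • ξ) - φhat ((2:ℝ) • ((r/2) • ξ)))
              * (φhat ξ - φhat ((2:ℝ) • ξ))
            + m ((2:ℝ)^j • (r • ξ)) * (φhat (r • ξ) - φhat ((2:ℝ) • (r • ξ)))
              * (φhat ξ - φhat ((2:ℝ) • ξ))
            + m ((2:ℝ)^(j-1) • ((2*r) • ξ)) * (φhat ((2*r) • ξ) - φhat ((2:ℝ) • ((2*r) • ξ)))
              * (φhat ξ - φhat ((2:ℝ) • ξ)))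
            + m ((2:ℝ)^(j-2) • ((4*r) • ξ)) * (φhat ((4*r) • ξ) - φhat ((2:ℝ) • ((4*r) • ξ)))
              * (φhat ξ - φhat ((2:ℝ) • ξ))) :=
      funext (key r hr1 hr2 j)
    rw [hfe]
    have t1 := hterm (j+2) (r/4) (by linarith) (by linarith)
    have t2 := hterm (j+1) (r/2) (by linarith) (by linarith)
    have t3 := hterm j r (by linarith) (by linarith)
    have t4 := hterm (j-1) (2*r) (by linarith) (by linarith)
    have t5 := hterm (j-2) (4*r) (by linarith) (by linarith)
    refine le_trans (Stmt18Aux.holderNorm_add s _ _) ?_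
    refine le_trans (add_le_add (Stmt18Aux.holderNorm_add s _ _) t5) ?_
    refine le_trans (add_le_add (add_le_add (Stmt18Aux.holderNorm_add s _ _) t4) le_rfl) ?_
    refine le_trans (add_le_add (add_le_add
      (add_le_add (Stmt18Aux.holderNorm_add s _ _) t3) le_rfl) le_rfl) ?_
    refine le_trans (add_le_add (add_le_add (add_le_add
      (add_le_add t1 t2) le_rfl) le_rfl) le_rfl) ?_
    have : 8 * Hψ * a (j+2) + 8 * Hψ * a (j+1) + 8 * Hψ * a j + 8 * Hψ * a (j-1)
        + 8 * Hψ * a (j-2) = 8 * Hψ * (a (j+2) + a (j+1) + a j + a (j-1) + a (j-2)) := by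
      ring
    rw [this]
  -- tsum bound for r ∈ [1,2]
  have hconst : (8 * Hψ)^2 * 256 * 5 ≤ ENNReal.ofReal (81920 * (P+1)^2) := by
    have h1 : 8 * Hψ ≤ ENNReal.ofReal (8 * (P+1)) := by
      rw [ENNReal.ofReal_mul (by norm_num : (0:ℝ) ≤ 8)]
      refine mul_le_mul' (by norm_num) ?_
      exact hHψP.trans (ENNReal.ofReal_le_ofReal (by linarith))
    calc (8 * Hψ)^2 * 256 * 5 ≤ (ENNReal.ofReal (8 * (P+1)))^2 * 256 * 5 := by
          gcongr
      _ = ENNReal.ofReal ((8 * (P+1))^2) * 1280 := by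
          rw [ENNReal.ofReal_pow (by positivity)]; ring
      _ = ENNReal.ofReal (81920 * (P+1)^2) := by
          rw [show (81920 : ℝ) * (P+1)^2 = ((8*(P+1))^2) * 1280 by ring,
            ENNReal.ofReal_mul (by positivity)]
          norm_num
  have hsum : ∀ (r : ℝ), 1 ≤ r → r ≤ 2 →
      (∑' j : ℤ, (holderNorm s fun ξ =>
          m ((r * (2:ℝ)^j) • ξ) * (φhat ξ - φhat ((2:ℝ) • ξ))) ^ 2)
        ≤ ENNReal.ofReal (81920 * (P+1)^2) * ∑' j : ℤ, a j ^ 2 := by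
    intro r hr1 hr2
    have step1 : ∀ j : ℤ,
        (holderNorm s fun ξ => m ((r * (2:ℝ)^j) • ξ) * (φhat ξ - φhat ((2:ℝ) • ξ))) ^ 2
          ≤ (8*Hψ)^2 * 256 * (a (j+2)^2 + a (j+1)^2 + a j^2 + a (j-1)^2 + a (j-2)^2) := by
      intro j
      calc (holderNorm s fun ξ => m ((r * (2:ℝ)^j) • ξ) * (φhat ξ - φhat ((2:ℝ) • ξ))) ^ 2
          ≤ (8 * Hψ * (a (j+2) + a (j+1) + a j + a (j-1) + a (j-2)))^2 :=
            pow_le_pow_left' (hbound r hr1 hr2 j) 2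
        _ = (8*Hψ)^2 * (a (j+2) + a (j+1) + a j + a (j-1) + a (j-2))^2 := by ring
        _ ≤ (8*Hψ)^2 * (256 * (a (j+2)^2 + a (j+1)^2 + a j^2 + a (j-1)^2 + a (j-2)^2)) :=
            mul_le_mul' le_rfl (Stmt18Aux.sq_add5_le _ _ _ _ _)
        _ = (8*Hψ)^2 * 256 * (a (j+2)^2 + a (j+1)^2 + a j^2 + a (j-1)^2 + a (j-2)^2) := by
            ring
    calc (∑' j : ℤ, (holderNorm s fun ξ =>
            m ((r * (2:ℝ)^j) • ξ) * (φhat ξ - φhat ((2:ℝ) • ξ))) ^ 2)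
        ≤ ∑' j : ℤ, (8*Hψ)^2 * 256
            * (a (j+2)^2 + a (j+1)^2 + a j^2 + a (j-1)^2 + a (j-2)^2) :=
          ENNReal.tsum_le_tsum step1
      _ = (8*Hψ)^2 * 256
            * ∑' j : ℤ, (a (j+2)^2 + a (j+1)^2 + a j^2 + a (j-1)^2 + a (j-2)^2) :=
          ENNReal.tsum_mul_left
      _ = (8*Hψ)^2 * 256 * (∑' j : ℤ, a (j+2)^2 + ∑' j : ℤ, a (j+1)^2 + ∑' j : ℤ, a j^2
            + ∑' j : ℤ, a (j-1)^2 + ∑' j : ℤ, a (j-2)^2) := by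
          rw [ENNReal.tsum_add, ENNReal.tsum_add, ENNReal.tsum_add, ENNReal.tsum_add]
      _ = (8*Hψ)^2 * 256 * (5 * ∑' j : ℤ, a j ^ 2) := by
          have s2 : ∑' j : ℤ, a (j+2)^2 = ∑' j : ℤ, a j^2 :=
            Stmt18Aux.tsum_shift (fun i => a i ^ 2) 2
          have s1 : ∑' j : ℤ, a (j+1)^2 = ∑' j : ℤ, a j^2 :=
            Stmt18Aux.tsum_shift (fun i => a i ^ 2) 1
          have sm1 : ∑' j : ℤ, a (j-1)^2 = ∑' j : ℤ, a j^2 := by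
            simp only [sub_eq_add_neg]
            exact Stmt18Aux.tsum_shift (fun i => a i ^ 2) (-1)
          have sm2 : ∑' j : ℤ, a (j-2)^2 = ∑' j : ℤ, a j^2 := by
            simp only [sub_eq_add_neg]
            exact Stmt18Aux.tsum_shift (fun i => a i ^ 2) (-2)
          rw [s2, s1, sm1, sm2]; ring
      _ = ((8*Hψ)^2 * 256 * 5) * ∑' j : ℤ, a j ^ 2 := by ring
      _ ≤ ENNReal.ofReal (81920 * (P+1)^2) * ∑' j : ℤ, a j ^ 2 :=
          mul_le_mul' hconst le_rfl
  -- reduce a general r > 0 to r ∈ [1,2]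
  refine iSup_le fun r => iSup_le fun hr => ?_
  set n : ℤ := ⌊Real.logb 2 r⌋ with hn
  have h2n : (0:ℝ) < (2:ℝ)^n := zpow_pos (by norm_num) n
  have hle1 : (2:ℝ)^n ≤ r := by
    have h1 : (2:ℝ) ^ (n:ℝ) ≤ (2:ℝ) ^ Real.logb 2 r :=
      Real.rpow_le_rpow_of_exponent_le one_le_two (Int.floor_le _)
    rw [Real.rpow_logb (by norm_num) (by norm_num) hr, Real.rpow_intCast] at h1
    exact h1
  have hle2 : r ≤ (2:ℝ)^(n+1) := by
    have h1 : (2:ℝ) ^ Real.logb 2 r ≤ (2:ℝ) ^ ((n+1 : ℤ) : ℝ) := by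
      refine Real.rpow_le_rpow_of_exponent_le one_le_two ?_
      push_cast
      exact (Int.lt_floor_add_one _).le
    rw [Real.rpow_logb (by norm_num) (by norm_num) hr, Real.rpow_intCast] at h1
    exact h1
  set r' : ℝ := r / 2^n with hr'def
  have hr1 : 1 ≤ r' := by rw [hr'def, le_div_iff₀ h2n]; linarith
  have hr2 : r' ≤ 2 := by
    rw [hr'def, div_le_iff₀ h2n]
    have : (2:ℝ)^(n+1) = 2 * 2^n := by
      rw [zpow_add₀ (two_ne_zero : (2:ℝ) ≠ 0)]; norm_num; ring
    linarith [this ▸ hle2]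
  have hmatch : ∀ j : ℤ, r * (2:ℝ)^j = r' * (2:ℝ)^(j+n) := by
    intro j
    rw [hr'def, zpow_add₀ (two_ne_zero : (2:ℝ) ≠ 0)]
    field_simp
  have hshift : (∑' j : ℤ, (holderNorm s fun ξ =>
        m ((r * (2:ℝ)^j) • ξ) * (φhat ξ - φhat ((2:ℝ) • ξ))) ^ 2)
      = ∑' j : ℤ, (holderNorm s fun ξ =>
        m ((r' * (2:ℝ)^j) • ξ) * (φhat ξ - φhat ((2:ℝ) • ξ))) ^ 2 := by
    have step : (∑' j : ℤ, (holderNorm s fun ξ =>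
          m ((r * (2:ℝ)^j) • ξ) * (φhat ξ - φhat ((2:ℝ) • ξ))) ^ 2)
        = ∑' j : ℤ, (fun i : ℤ => (holderNorm s fun ξ =>
            m ((r' * (2:ℝ)^i) • ξ) * (φhat ξ - φhat ((2:ℝ) • ξ))) ^ 2) (j + n) := by
      refine tsum_congr fun j => ?_
      simp only
      rw [hmatch j]
    rw [step]
    exact Stmt18Aux.tsum_shift (fun i : ℤ => (holderNorm s fun ξ =>
      m ((r' * (2:ℝ)^i) • ξ) * (φhat ξ - φhat ((2:ℝ) • ξ))) ^ 2) n
  rw [hshift]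
  exact hsum r' hr1 hr2
end
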